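/- arXiv:1011.0667 — 6 statements merged into one kernel-verified Lean document; each statement's English description precedes it below -/
import Mathlib

section
/- Let E be a measurable subset of ℝⁿ and let 0 < β < n. Then ∫_E |z|^(β−n) dz ≤ C·|E|^(β/n), where |E| denotes the Lebesgue measure of E and C depends only on n and β. -/
open MeasureTheory Set Metric Module
open scoped ENNReal

/-! By the layer-cake formula, `∫_E f = ∫_0^∞ |E ∩ {f ≥ t}| dt`. For `f z = ‖z‖ ^ (β - n)` the
superlevel set `{f ≥ t}` is a ball of measure `κ t ^ (-p)` with `p = n / (n - β) > 1`, so the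
integrand is at most `min |E| (κ t ^ (-p))`. Splitting the `t`-integral where the two bounds cross
gives `p / (p - 1) · κ ^ (1 / p) · |E| ^ (1 - 1 / p)`, and `1 - 1 / p = β / n`. -/

theorem lintegral_Ioi_min_const_rpow_le {m κ p : ℝ} (hm : 0 < m) (hκ : 0 < κ) (hp : 1 < p) :
    ∫⁻ t in Ioi (0 : ℝ), min (ENNReal.ofReal m) (ENNReal.ofReal (κ * t ^ (-p))) ≤
      ENNReal.ofReal (p / (p - 1) * κ ^ p⁻¹ * m ^ (1 - p⁻¹)) := by
  set T := (κ / m) ^ p⁻¹ with hT_def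
  have hT : 0 < T := by positivity
  -- `T` is where the two bounds cross: `κ * T ^ (-p) = m`.
  have hmT : m * T = κ ^ p⁻¹ * m ^ (1 - p⁻¹) := by
    rw [hT_def, Real.div_rpow hκ.le hm.le, Real.rpow_sub hm, Real.rpow_one]
    field_simp
  have hκT : κ * T ^ (-p + 1) = m * T := by
    rw [Real.rpow_add hT, Real.rpow_one, Real.rpow_neg hT.le, hT_def,
      ← Real.rpow_mul (by positivity), inv_mul_cancel₀ (by linarith), Real.rpow_one]
    field_simp
  have h_tail : ∫⁻ t in Ioi T, ENNReal.ofReal (κ * t ^ (-p)) =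
      ENNReal.ofReal (m * T / (p - 1)) := by
    rw [← ofReal_integral_eq_lintegral_ofReal
      ((integrableOn_Ioi_rpow_of_lt (by linarith) hT).const_mul κ)
      ((ae_restrict_iff' measurableSet_Ioi).2 (ae_of_all _ fun t ht =>
        mul_nonneg hκ.le (Real.rpow_nonneg (hT.trans ht).le _))),
      integral_const_mul, integral_Ioi_rpow_of_lt (by linarith) hT, ← hκT]
    rw [show -p + 1 = -(p - 1) by ring, div_neg, neg_div, neg_neg, mul_div_assoc]
  calc ∫⁻ t in Ioi (0 : ℝ), min (ENNReal.ofReal m) (ENNReal.ofReal (κ * t ^ (-p)))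
      ≤ (∫⁻ _ in Ioc 0 T, ENNReal.ofReal m) + ∫⁻ t in Ioi T, ENNReal.ofReal (κ * t ^ (-p)) := by
        rw [← Ioc_union_Ioi_eq_Ioi hT.le]
        exact (lintegral_union_le _ _ _).trans <| add_le_add
          (setLIntegral_mono' measurableSet_Ioc fun _ _ => min_le_left _ (ENNReal.ofReal _))
          (setLIntegral_mono' measurableSet_Ioi fun _ _ => min_le_right (ENNReal.ofReal m) _)
    _ = ENNReal.ofReal (m * T + m * T / (p - 1)) := by
        rw [setLIntegral_const, Real.volume_Ioc, sub_zero, h_tail, ← ENNReal.ofReal_mul hm.le,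
          ENNReal.ofReal_add (by positivity) (div_nonneg (by positivity) (by linarith))]
    _ = ENNReal.ofReal (p / (p - 1) * κ ^ p⁻¹ * m ^ (1 - p⁻¹)) := by
        have hp1 : p - 1 ≠ 0 := by linarith
        rw [mul_assoc, ← hmT]
        congr 1
        field_simp
        ring

theorem setLIntegral_le_of_meas_le_rpow {X : Type*} [MeasurableSpace X] {μ : Measure X}
    {f : X → ℝ} (hf_nonneg : 0 ≤ f) (hf : AEMeasurable f μ) {κ p : ℝ} (hκ : 0 < κ) (hp : 1 < p)
    (h_weak : ∀ t > 0, μ {x | t ≤ f x} ≤ ENNReal.ofReal (κ * t ^ (-p))) (E : Set X) :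
    ∫⁻ x in E, ENNReal.ofReal (f x) ∂μ ≤
      ENNReal.ofReal (p / (p - 1) * κ ^ p⁻¹) * μ E ^ (1 - p⁻¹) := by
  have hq : 0 < 1 - p⁻¹ := sub_pos.2 (inv_lt_one_of_one_lt₀ hp)
  have hC : 0 < p / (p - 1) * κ ^ p⁻¹ := by
    have : 0 < p - 1 := sub_pos.2 hp
    positivity
  rcases eq_or_ne (μ E) 0 with h0 | h0
  · simp [Measure.restrict_eq_zero.2 h0]
  rcases eq_or_ne (μ E) ⊤ with htop | htop
  · rw [htop, ENNReal.top_rpow_of_pos hq, ENNReal.mul_top (ENNReal.ofReal_pos.2 hC).ne']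
    exact le_top
  have hm : 0 < (μ E).toReal := ENNReal.toReal_pos h0 htop
  calc ∫⁻ x in E, ENNReal.ofReal (f x) ∂μ = ∫⁻ t in Ioi 0, μ.restrict E {x | t ≤ f x} :=
        lintegral_eq_lintegral_meas_le _ (ae_of_all _ hf_nonneg) hf.restrict
    _ ≤ ∫⁻ t in Ioi 0, min (ENNReal.ofReal (μ E).toReal) (ENNReal.ofReal (κ * t ^ (-p))) := by
        refine setLIntegral_mono' measurableSet_Ioi fun t ht => le_min ?_ ?_
        · rw [ENNReal.ofReal_toReal htop, ← Measure.restrict_apply_univ E]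
          exact measure_mono (subset_univ _)
        · exact (Measure.restrict_apply_le _ _).trans (h_weak t ht)
    _ ≤ _ := lintegral_Ioi_min_const_rpow_le hm hκ hp
    _ = _ := by
        rw [ENNReal.ofReal_mul hC.le, ← ENNReal.ofReal_rpow_of_pos hm,
          ENNReal.ofReal_toReal htop]

theorem addHaar_setOf_le_norm_rpow_neg_le {F : Type*} [NormedAddCommGroup F] [NormedSpace ℝ F]
    [FiniteDimensional ℝ F] [MeasurableSpace F] [BorelSpace F] (μ : Measure F)
    [μ.IsAddHaarMeasure] {α t : ℝ} (hα : 0 < α) (ht : 0 < t) :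
    μ {z | t ≤ ‖z‖ ^ (-α)} ≤
      ENNReal.ofReal (μ.real (ball 0 1) * t ^ (-(finrank ℝ F / α))) := by
  have hα' : -α < 0 := neg_neg_of_pos hα
  have h_sub : {z : F | t ≤ ‖z‖ ^ (-α)} ⊆ closedBall 0 (t ^ (-α)⁻¹) := by
    intro z hz
    have hz0 : 0 < ‖z‖ := by
      refine (norm_nonneg z).lt_of_ne fun h => ?_
      rw [mem_ofPred_eq, ← h, Real.zero_rpow hα'.ne] at hz
      exact ht.not_ge hz
    rw [mem_closedBall, dist_zero_right]
    exact (Real.le_rpow_inv_iff_of_neg hz0 ht hα').2 hz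
  calc μ {z | t ≤ ‖z‖ ^ (-α)} ≤ μ (closedBall 0 (t ^ (-α)⁻¹)) := measure_mono h_sub
    _ = ENNReal.ofReal ((t ^ (-α)⁻¹) ^ finrank ℝ F) * μ (ball 0 1) :=
        Measure.addHaar_closedBall _ _ (by positivity)
    _ = ENNReal.ofReal (μ.real (ball 0 1) * t ^ (-(finrank ℝ F / α))) := by
        rw [mul_comm, ENNReal.ofReal_mul measureReal_nonneg, measureReal_def,
          ENNReal.ofReal_toReal measure_ball_lt_top.ne, ← Real.rpow_natCast,
          ← Real.rpow_mul ht.le, inv_neg, neg_mul, inv_mul_eq_div]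

theorem stmt_0_general (n : ℕ) (β : ℝ) (hβ : 0 < β) (hβn : β < n) :
    ∃ C : ℝ, 0 < C ∧ ∀ E : Set (EuclideanSpace ℝ (Fin n)), MeasurableSet E →
      ∫⁻ z in E, ENNReal.ofReal (‖z‖ ^ (β - (n : ℝ))) ≤
        ENNReal.ofReal C * (volume E) ^ (β / (n : ℝ)) := by
  set κ := volume.real (ball (0 : EuclideanSpace ℝ (Fin n)) 1)
  have hκ : 0 < κ := ENNReal.toReal_pos (measure_ball_pos _ _ one_pos).ne' measure_ball_lt_top.ne
  have hα : 0 < (n : ℝ) - β := sub_pos.2 hβn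
  set p := (n : ℝ) / (n - β)
  have hp : 1 < p := (one_lt_div hα).2 (by linarith)
  have hp_inv : 1 - p⁻¹ = β / n := by
    rw [inv_div, one_sub_div (by linarith), sub_sub_cancel]
  have hp1 : 0 < p - 1 := sub_pos.2 hp
  refine ⟨p / (p - 1) * κ ^ p⁻¹, by positivity, fun E _ => ?_⟩
  simp_rw [← hp_inv, ← neg_sub (n : ℝ) β]
  refine setLIntegral_le_of_meas_le_rpow (fun z => by positivity) (by fun_prop) hκ hp
    (fun t ht => ?_) E
  have h := addHaar_setOf_le_norm_rpow_neg_le (volume : Measure (EuclideanSpace ℝ (Fin n))) hα ht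
  rwa [finrank_euclideanSpace_fin] at h

theorem stmt_0 (n : ℕ) (hn : 0 < n) (β : ℝ) (hβ : 0 < β) (hβn : β < n) :
    ∃ C : ℝ, 0 < C ∧ ∀ E : Set (EuclideanSpace ℝ (Fin n)), MeasurableSet E →
      ∫⁻ z in E, ENNReal.ofReal (‖z‖ ^ (β - (n : ℝ))) ≤
        ENNReal.ofReal C * (volume E) ^ (β / (n : ℝ)) :=
  stmt_0_general n β hβ hβn
end

section
/- For every x ∈ ℝⁿ and t > 0, the absolute value of the principal value integral p.v. ∫_{B(x,t)} y/|y|^{n+1} dy is at most C·log((|x|+t)/||x|−t|), with C depending only on n. -/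
/-!
The kernel `y ↦ y / ‖y‖ ^ (n + 1)` is odd. The ball `B(x, t)` either contains or misses
`B(0, |‖x‖ - t|)`, so for `ε < |‖x‖ - t|` the truncated integrals no longer depend on `ε`, and
the principal value is the integral over `B(x, t) \ B(0, |‖x‖ - t|)`. This set lies in the annulus
`|‖x‖ - t| ≤ ‖y‖ ≤ ‖x‖ + t`, on which `‖y‖ ^ (-n)` integrates in polar coordinates to
`n |B(0, 1)| log ((‖x‖ + t) / |‖x‖ - t|)`.

When `‖x‖ = t` the right-hand side is `log 0 = 0` (division by zero gives `0`), and there is no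
principal value: near `0` the ball `B(x, ‖x‖)` contains a cone around `x`, and by scaling every
dyadic shell `ε / 2 < ‖y‖ < ε` of that cone contributes the same positive amount to the inner
product of the truncated integral with `x`.
-/

open MeasureTheory Topology Metric Set Pointwise Module
open scoped RealInnerProductSpace

theorem Real.rpow_neg_add_one_mul_self {r : ℝ} (hr : 0 < r) (s : ℝ) :
    r ^ (-(s + 1)) * r = r ^ (-s) := by
  rw [← Real.rpow_add_one hr.ne']
  ring_nf

section
variable {E F : Type*} [NormedAddCommGroup F] [NormedSpace ℝ F]

theorem setIntegral_eq_zero_of_odd [AddGroup E] [MeasurableSpace E] [MeasurableNeg E]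
    {μ : Measure E} [μ.IsNegInvariant] {s : Set E} (hs : MeasurableSet s) (hs_neg : -s = s)
    {f : E → F} (hf : ∀ y, f (-y) = -f y) : ∫ y in s, f y ∂μ = 0 := by
  have h_odd : ∀ y, s.indicator f (-y) = -s.indicator f y := fun y ↦ by
    by_cases hy : y ∈ s
    · rw [indicator_of_mem hy, indicator_of_mem (by rwa [← hs_neg, Set.neg_mem_neg]), hf]
    · rw [indicator_of_notMem hy, indicator_of_notMem (by rwa [← hs_neg, Set.neg_mem_neg]),
        neg_zero]
  have h := integral_neg_eq_self (s.indicator f) μ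
  simp only [h_odd, integral_neg] at h
  rw [← integral_indicator hs]
  linear_combination (norm := module) (-(1 / 2 : ℝ)) • h

theorem setIntegral_sdiff_ball_sub_setIntegral_sdiff_ball [NormedAddCommGroup E]
    [MeasurableSpace E] [OpensMeasurableSpace E] {μ : Measure E} {f : E → F} {U : Set E}
    (hU : MeasurableSet U) {ε ε' : ℝ} (hε : ε' ≤ ε) (hf : IntegrableOn f (U \ ball 0 ε') μ) :
    ∫ y in U \ ball 0 ε', f y ∂μ - ∫ y in U \ ball 0 ε, f y ∂μ =
      ∫ y in U ∩ (ball 0 ε \ ball 0 ε'), f y ∂μ := by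
  have h_split : U \ ball 0 ε' = U \ ball 0 ε ∪ U ∩ (ball 0 ε \ ball 0 ε') := by
    ext y
    simp only [mem_sdiff, mem_union, mem_inter_iff, mem_ball_zero_iff]
    constructor
    · rintro ⟨hU, hε'⟩
      by_cases hy : ‖y‖ < ε <;> tauto
    · rintro (⟨hU, hy⟩ | ⟨hU, hy, hy'⟩)
      · exact ⟨hU, fun h ↦ hy (h.trans_le hε)⟩
      · exact ⟨hU, hy'⟩
  have h_disj : Disjoint (U \ ball 0 ε) (U ∩ (ball 0 ε \ ball 0 ε')) :=
    disjoint_left.2 fun y hy hy' ↦ hy.2 hy'.2.1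
  rw [h_split] at hf ⊢
  rw [setIntegral_union h_disj (hU.inter (measurableSet_ball.diff measurableSet_ball))
    (hf.mono_set subset_union_left) (hf.mono_set subset_union_right), add_sub_cancel_left]

theorem ball_subset_closedBall_zero [NormedAddCommGroup E] (x : E) (t : ℝ) :
    ball x t ⊆ closedBall 0 (‖x‖ + t) :=
  ball_subset_closedBall.trans <| closedBall_subset_closedBall' (by simp [add_comm])

theorem neg_ball_inter_ball_zero_abs_sub [NormedAddCommGroup E] (x : E) (t : ℝ) :
    -(ball x t ∩ ball 0 |‖x‖ - t|) = ball x t ∩ ball 0 |‖x‖ - t| := by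
  rcases lt_or_ge ‖x‖ t with hxt | hxt
  · have h_sub : ball (0 : E) |‖x‖ - t| ⊆ ball x t :=
      ball_subset_ball' (by rw [abs_of_neg (by linarith), dist_zero_left]; linarith)
    rw [inter_eq_right.2 h_sub]
    ext y
    simp
  · have h_disj : ball x t ∩ ball (0 : E) |‖x‖ - t| = ∅ := by
      refine ball_disjoint_ball ?_ |>.inter_eq
      rw [abs_of_nonneg (by linarith), dist_zero_right]
      linarith
    rw [h_disj, neg_empty]

end

theorem setIntegral_Icc_rpow_neg_one {a b : ℝ} (ha : 0 < a) (hab : a ≤ b) :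
    ∫ r in Icc a b, r ^ (-1 : ℝ) = Real.log (b / a) := by
  rw [integral_Icc_eq_integral_Ioc, ← intervalIntegral.integral_of_le hab,
    ← integral_inv (notMem_uIcc_of_lt ha (ha.trans_le hab))]
  exact intervalIntegral.integral_congr fun r _ ↦ Real.rpow_neg_one r

section Annulus
variable {E : Type*} [NormedAddCommGroup E] [NormedSpace ℝ E] [FiniteDimensional ℝ E]
  [MeasurableSpace E] [BorelSpace E] (μ : Measure E) [μ.IsAddHaarMeasure]

theorem integral_annulus_norm_rpow_neg_finrank [Nontrivial E] {a b : ℝ} (ha : 0 < a)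
    (hab : a ≤ b) :
    ∫ y in closedBall (0 : E) b \ ball 0 a, ‖y‖ ^ (-(finrank ℝ E : ℝ)) ∂μ =
      finrank ℝ E * μ.real (ball 0 1) * Real.log (b / a) := by
  set d := finrank ℝ E
  have hd : 0 < d := finrank_pos
  let g : ℝ → ℝ := (Icc a b).indicator fun r ↦ r ^ (-(d : ℝ))
  have h_radial : (closedBall (0 : E) b \ ball 0 a).indicator (fun y ↦ ‖y‖ ^ (-(d : ℝ))) =
      fun y ↦ g ‖y‖ := by
    ext y
    simp only [g, indicator, mem_sdiff, mem_closedBall_zero_iff, mem_ball_zero_iff, not_lt,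
      mem_Icc, and_comm]
  have h_profile : ∫ r in Ioi (0 : ℝ), r ^ (d - 1) • g r = ∫ r in Icc a b, r ^ (-1 : ℝ) := by
    rw [← integral_indicator measurableSet_Icc, ← integral_indicator measurableSet_Ioi]
    congr 1 with r
    by_cases hr : r ∈ Icc a b
    · have hr0 : 0 < r := ha.trans_le hr.1
      simp only [g, indicator_of_mem hr, indicator_of_mem (mem_Ioi.2 hr0), smul_eq_mul]
      rw [← Real.rpow_natCast, ← Real.rpow_add hr0, Nat.cast_sub hd]
      ring_nf
    · simp [g, indicator_of_notMem hr]
  rw [← integral_indicator (measurableSet_closedBall.diff measurableSet_ball), h_radial,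
    integral_fun_norm_addHaar μ g, h_profile, setIntegral_Icc_rpow_neg_one ha hab,
    nsmul_eq_mul, smul_eq_mul, mul_assoc]

end Annulus

section Kernel
variable {E : Type*} [NormedAddCommGroup E] [NormedSpace ℝ E]

noncomputable def rieszKernel (y : E) : E := ‖y‖ ^ (-((finrank ℝ E : ℝ) + 1)) • y

theorem rieszKernel_neg (y : E) : rieszKernel (-y) = -rieszKernel y := by
  simp [rieszKernel]

theorem norm_rieszKernel {y : E} (hy : y ≠ 0) :
    ‖rieszKernel y‖ = ‖y‖ ^ (-(finrank ℝ E : ℝ)) := by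
  have hy' : 0 < ‖y‖ := norm_pos_iff.2 hy
  rw [rieszKernel, norm_smul, Real.norm_of_nonneg (by positivity),
    Real.rpow_neg_add_one_mul_self hy']

theorem continuousOn_rieszKernel : ContinuousOn (rieszKernel (E := E)) {0}ᶜ := fun _ hy ↦
  (((Real.continuousAt_rpow_const _ _ (.inl (norm_ne_zero_iff.2 hy))).comp
    continuous_norm.continuousAt).smul continuousAt_id).continuousWithinAt

variable [FiniteDimensional ℝ E] [MeasurableSpace E] [BorelSpace E] (μ : Measure E)
  [μ.IsAddHaarMeasure]

theorem integrableOn_rieszKernel_annulus {ε : ℝ} (hε : 0 < ε) (R : ℝ) :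
    IntegrableOn rieszKernel (closedBall (0 : E) R \ ball 0 ε) μ := by
  refine continuousOn_rieszKernel.mono ?_ |>.integrableOn_compact
    ((isCompact_closedBall _ _).diff isOpen_ball)
  rintro y ⟨-, hy⟩ rfl
  exact hy (mem_ball_self hε)

theorem integrableOn_rieszKernel_ball_sdiff_ball (x : E) (t : ℝ) {ε : ℝ} (hε : 0 < ε) :
    IntegrableOn rieszKernel (ball x t \ ball 0 ε) μ :=
  (integrableOn_rieszKernel_annulus μ hε _).mono_set
    (sdiff_subset_sdiff_left (ball_subset_closedBall_zero x t))

theorem norm_setIntegral_rieszKernel_le [Nontrivial E] {s : Set E} {a b : ℝ} (ha : 0 < a)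
    (hab : a ≤ b) (hs : s ⊆ closedBall 0 b \ ball 0 a) :
    ‖∫ y in s, rieszKernel y ∂μ‖ ≤ finrank ℝ E * μ.real (ball 0 1) * Real.log (b / a) := by
  have h_ne : ∀ y ∈ closedBall (0 : E) b \ ball 0 a, y ≠ 0 := by
    rintro y ⟨-, hy⟩ rfl
    exact hy (mem_ball_self ha)
  calc ‖∫ y in s, rieszKernel y ∂μ‖
      ≤ ∫ y in s, ‖rieszKernel y‖ ∂μ := norm_integral_le_integral_norm _
    _ ≤ ∫ y in closedBall 0 b \ ball 0 a, ‖rieszKernel y‖ ∂μ :=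
        setIntegral_mono_set (integrableOn_rieszKernel_annulus μ ha b).norm
          (.of_forall fun _ ↦ norm_nonneg _) hs.eventuallyLE
    _ = ∫ y in closedBall 0 b \ ball 0 a, ‖y‖ ^ (-(finrank ℝ E : ℝ)) ∂μ :=
        setIntegral_congr_fun (measurableSet_closedBall.diff measurableSet_ball)
          fun y hy ↦ norm_rieszKernel (h_ne y hy)
    _ = _ := integral_annulus_norm_rpow_neg_finrank μ ha hab

theorem setIntegral_rieszKernel_ball_sdiff_ball {x : E} {t ε : ℝ} (hε : 0 < ε)
    (hεa : ε ≤ |‖x‖ - t|) :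
    ∫ y in ball x t \ ball 0 ε, rieszKernel y ∂μ =
      ∫ y in ball x t \ ball 0 |‖x‖ - t|, rieszKernel y ∂μ := by
  have h_odd : ∫ y in ball x t ∩ (ball 0 |‖x‖ - t| \ ball 0 ε), rieszKernel y ∂μ = 0 := by
    rw [← inter_sdiff_assoc]
    refine setIntegral_eq_zero_of_odd
      ((measurableSet_ball.inter measurableSet_ball).diff measurableSet_ball) ?_ rieszKernel_neg
    ext y
    have h := Set.ext_iff.1 (neg_ball_inter_ball_zero_abs_sub x t) y
    rw [Set.mem_neg] at h ⊢
    simp only [mem_sdiff, h, mem_ball_zero_iff, norm_neg]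
  rw [← sub_eq_zero, setIntegral_sdiff_ball_sub_setIntegral_sdiff_ball measurableSet_ball hεa
    (integrableOn_rieszKernel_ball_sdiff_ball μ x t hε), h_odd]

theorem norm_le_of_tendsto_pv [Nontrivial E] {x : E} {t : ℝ} (ht : 0 ≤ t) (hxt : ‖x‖ ≠ t)
    {L : E} (hL : Filter.Tendsto (fun ε ↦ ∫ y in ball x t \ ball 0 ε, rieszKernel y ∂μ)
      (𝓝[>] 0) (𝓝 L)) :
    ‖L‖ ≤ finrank ℝ E * μ.real (ball 0 1) * Real.log ((‖x‖ + t) / |‖x‖ - t|) := by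
  have ha : 0 < |‖x‖ - t| := abs_pos.2 (sub_ne_zero.2 hxt)
  have h_eventually_const : Filter.Tendsto
      (fun ε ↦ ∫ y in ball x t \ ball 0 ε, rieszKernel y ∂μ) (𝓝[>] 0)
      (𝓝 (∫ y in ball x t \ ball 0 |‖x‖ - t|, rieszKernel y ∂μ)) :=
    tendsto_const_nhds.congr' <| Filter.eventually_of_mem (Ioc_mem_nhdsGT ha) fun ε hε ↦
      (setIntegral_rieszKernel_ball_sdiff_ball μ hε.1 hε.2).symm
  rw [tendsto_nhds_unique hL h_eventually_const]
  exact norm_setIntegral_rieszKernel_le μ ha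
    (abs_sub_le_iff.2 ⟨by linarith [norm_nonneg x], by linarith [norm_nonneg x]⟩)
    (sdiff_subset_sdiff_left (ball_subset_closedBall_zero x t))

end Kernel

section Degenerate
variable {E : Type*} [NormedAddCommGroup E] [InnerProductSpace ℝ E]

/-- The open cone of vectors making an angle less than `π / 3` with `x`. -/
def coneAround (x : E) : Set E := {y | ‖x‖ * ‖y‖ < 2 * ⟪x, y⟫}

theorem isOpen_coneAround (x : E) : IsOpen (coneAround x) :=
  isOpen_lt (continuous_const.mul continuous_norm)
    (continuous_const.mul (continuous_const.inner continuous_id))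

theorem smul_coneAround (x : E) {c : ℝ} (hc : 0 < c) : c • coneAround x = coneAround x := by
  ext y
  rw [mem_smul_set_iff_inv_smul_mem₀ hc.ne']
  simp only [coneAround, mem_ofPred_eq, norm_smul, Real.norm_of_nonneg (inv_pos.2 hc).le,
    inner_smul_right]
  constructor <;> intro h <;> nlinarith [inv_pos.2 hc, mul_inv_cancel₀ hc.ne']

theorem mem_ball_norm_iff {x y : E} : y ∈ ball x ‖x‖ ↔ ‖y‖ ^ 2 < 2 * ⟪x, y⟫ := by
  rw [mem_ball_iff_norm, ← pow_lt_pow_iff_left₀ (norm_nonneg _) (norm_nonneg _) two_ne_zero,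
    norm_sub_sq_real, real_inner_comm]
  constructor <;> intro h <;> linarith

theorem coneAround_inter_ball_subset (x : E) : coneAround x ∩ ball 0 ‖x‖ ⊆ ball x ‖x‖ := by
  rintro y ⟨hy_cone, hy_ball⟩
  rw [mem_ball_zero_iff] at hy_ball
  rw [mem_ball_norm_iff]
  have : ‖y‖ * ‖y‖ ≤ ‖x‖ * ‖y‖ := mul_le_mul_of_nonneg_right hy_ball.le (norm_nonneg y)
  exact (pow_two ‖y‖).trans_le this |>.trans_lt hy_cone

theorem smul_coneAround_inter_annulus (x : E) {ε : ℝ} (hε : 0 < ε) :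
    ε • (coneAround x ∩ (ball 0 1 \ closedBall 0 (1 / 2))) =
      coneAround x ∩ (ball 0 ε \ closedBall 0 (ε / 2)) := by
  rw [smul_set_inter₀ hε.ne', smul_set_sdiff₀ hε.ne', smul_coneAround x hε,
    _root_.smul_ball hε.ne', smul_closedBall' hε.ne', smul_zero, Real.norm_of_nonneg hε.le,
    mul_one, mul_one_div]

theorem inner_rieszKernel (x y : E) :
    ⟪x, rieszKernel y⟫ = ‖y‖ ^ (-((finrank ℝ E : ℝ) + 1)) * ⟪x, y⟫ :=
  real_inner_smul_right _ _ _

theorem inner_rieszKernel_nonneg_of_mem_ball {x y : E} (hy : y ∈ ball x ‖x‖) :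
    0 ≤ ⟪x, rieszKernel y⟫ := by
  rw [inner_rieszKernel]
  have := mem_ball_norm_iff.1 hy
  exact mul_nonneg (by positivity) (by nlinarith [sq_nonneg ‖y‖])

theorem le_inner_rieszKernel_of_mem_coneAround {x y : E} {ε : ℝ} (hy : y ∈ coneAround x)
    (hyε : ‖y‖ ≤ ε) : ‖x‖ / 2 * ε ^ (-(finrank ℝ E : ℝ)) ≤ ⟪x, rieszKernel y⟫ := by
  have hy0 : 0 < ‖y‖ := by
    refine norm_pos_iff.2 fun h ↦ ?_
    simp [coneAround, h] at hy
  calc ‖x‖ / 2 * ε ^ (-(finrank ℝ E : ℝ))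
      ≤ ‖x‖ / 2 * ‖y‖ ^ (-(finrank ℝ E : ℝ)) :=
        mul_le_mul_of_nonneg_left
          (Real.rpow_le_rpow_of_nonpos hy0 hyε (neg_nonpos.2 (Nat.cast_nonneg _))) (by positivity)
    _ = ‖y‖ ^ (-((finrank ℝ E : ℝ) + 1)) * (‖x‖ * ‖y‖ / 2) := by
        rw [← Real.rpow_neg_add_one_mul_self hy0]
        ring
    _ ≤ ⟪x, rieszKernel y⟫ := by
        rw [inner_rieszKernel]
        gcongr
        linarith [show ‖x‖ * ‖y‖ < 2 * ⟪x, y⟫ from hy]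

theorem measure_coneAround_inter_annulus_pos [MeasurableSpace E] (μ : Measure E)
    [μ.IsOpenPosMeasure] {x : E} (hx : x ≠ 0) :
    0 < μ (coneAround x ∩ (ball 0 1 \ closedBall 0 (1 / 2))) := by
  have hx' : 0 < ‖x‖ := norm_pos_iff.2 hx
  set w := (3 / (4 * ‖x‖)) • x
  have hw : ‖w‖ = 3 / 4 := by
    rw [norm_smul, Real.norm_of_nonneg (by positivity)]
    field_simp
  have hxw : ⟪x, w⟫ = 3 / 4 * ‖x‖ := by
    rw [inner_smul_right, real_inner_self_eq_norm_sq]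
    field_simp
  refine ((isOpen_coneAround x).inter (isOpen_ball.sdiff isClosed_closedBall)).measure_pos μ
    ⟨w, ?_, ?_, ?_⟩
  · show ‖x‖ * ‖w‖ < 2 * ⟪x, w⟫
    rw [hw, hxw]
    linarith
  · rw [mem_ball_zero_iff, hw]
    norm_num
  · rw [mem_closedBall_zero_iff, hw]
    norm_num

variable [FiniteDimensional ℝ E] [MeasurableSpace E] [BorelSpace E] (μ : Measure E)
  [μ.IsAddHaarMeasure]

theorem le_inner_setIntegral_rieszKernel_shell {x : E} {ε : ℝ} (hε : 0 < ε) (hεx : ε ≤ ‖x‖) :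
    ‖x‖ / 2 * μ.real (coneAround x ∩ (ball 0 1 \ closedBall 0 (1 / 2))) ≤
      ⟪x, ∫ y in ball x ‖x‖ ∩ (ball 0 ε \ ball 0 (ε / 2)), rieszKernel y ∂μ⟫ := by
  set S := coneAround x ∩ (ball (0 : E) ε \ closedBall 0 (ε / 2)) with hS
  set D := ball x ‖x‖ ∩ (ball (0 : E) ε \ ball 0 (ε / 2))
  have hSD : S ⊆ D := fun y hy ↦
    ⟨coneAround_inter_ball_subset x ⟨hy.1, ball_subset_ball hεx hy.2.1⟩,
      hy.2.1, fun h ↦ hy.2.2 (ball_subset_closedBall h)⟩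
  have h_int : IntegrableOn rieszKernel D μ :=
    (integrableOn_rieszKernel_annulus μ (half_pos hε) ε).mono_set
      fun y hy ↦ ⟨ball_subset_closedBall hy.2.1, hy.2.2⟩
  have h_int_inner : IntegrableOn (fun y ↦ ⟪x, rieszKernel y⟫) D μ := h_int.const_inner x
  have h_scale : μ S = ENNReal.ofReal (ε ^ finrank ℝ E) *
      μ (coneAround x ∩ (ball 0 1 \ closedBall 0 (1 / 2))) := by
    rw [hS, ← smul_coneAround_inter_annulus x hε, Measure.addHaar_smul_of_nonneg μ hε.le]
  calc ‖x‖ / 2 * μ.real (coneAround x ∩ (ball 0 1 \ closedBall 0 (1 / 2)))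
      = ‖x‖ / 2 * ε ^ (-(finrank ℝ E : ℝ)) * μ.real S := by
        rw [measureReal_def, measureReal_def, h_scale, ENNReal.toReal_mul,
          ENNReal.toReal_ofReal (by positivity), Real.rpow_neg hε.le, Real.rpow_natCast]
        field_simp
    _ ≤ ∫ y in S, ⟪x, rieszKernel y⟫ ∂μ :=
        setIntegral_ge_of_const_le_real
          ((isOpen_coneAround x).measurableSet.inter
            (measurableSet_ball.diff measurableSet_closedBall))
          (measure_ne_top_of_subset (fun y hy ↦ hy.2.1) measure_ball_lt_top.ne)
          (fun y hy ↦
            le_inner_rieszKernel_of_mem_coneAround hy.1 (mem_ball_zero_iff.1 hy.2.1).le)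
          (h_int_inner.mono_set hSD)
    _ ≤ ∫ y in D, ⟪x, rieszKernel y⟫ ∂μ :=
        setIntegral_mono_set h_int_inner
          ((ae_restrict_iff' (measurableSet_ball.inter
            (measurableSet_ball.diff measurableSet_ball))).2
            (.of_forall fun y hy ↦ inner_rieszKernel_nonneg_of_mem_ball hy.1))
          hSD.eventuallyLE
    _ = ⟪x, ∫ y in D, rieszKernel y ∂μ⟫ := integral_inner h_int x

theorem not_tendsto_pv_of_norm_eq {x : E} (hx : x ≠ 0) (L : E) :
    ¬ Filter.Tendsto (fun ε ↦ ∫ y in ball x ‖x‖ \ ball 0 ε, rieszKernel y ∂μ)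
      (𝓝[>] 0) (𝓝 L) := by
  intro hL
  set I := fun ε ↦ ∫ y in ball x ‖x‖ \ ball 0 ε, rieszKernel y ∂μ
  set δ := ‖x‖ / 2 * μ.real (coneAround x ∩ (ball 0 1 \ closedBall 0 (1 / 2)))
  have hδ : 0 < δ := mul_pos (by positivity) <|
    ENNReal.toReal_pos (measure_coneAround_inter_annulus_pos μ hx).ne'
      (measure_ne_top_of_subset (fun y hy ↦ hy.2.1) measure_ball_lt_top.ne)
  have h_half : Filter.Tendsto (fun ε : ℝ ↦ ε / 2) (𝓝[>] 0) (𝓝[>] 0) :=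
    tendsto_nhdsWithin_of_tendsto_nhds_of_eventually_within _
      (((continuous_id.div_const (2 : ℝ)).tendsto' 0 0 (by simp)).mono_left nhdsWithin_le_nhds)
      (eventually_nhdsWithin_of_forall fun _ h ↦ mem_Ioi.2 (half_pos h))
  have h_diff : Filter.Tendsto (fun ε ↦ ⟪x, I (ε / 2) - I ε⟫) (𝓝[>] 0) (𝓝 0) := by
    simpa using tendsto_const_nhds.inner ((hL.comp h_half).sub hL)
  have h_shell : ∀ᶠ ε in 𝓝[>] 0, δ ≤ ⟪x, I (ε / 2) - I ε⟫ :=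
    Filter.eventually_of_mem (Ioc_mem_nhdsGT (norm_pos_iff.2 hx)) fun ε hε ↦ by
      rw [setIntegral_sdiff_ball_sub_setIntegral_sdiff_ball measurableSet_ball
        (half_le_self hε.1.le) (integrableOn_rieszKernel_ball_sdiff_ball μ x _ (half_pos hε.1))]
      exact le_inner_setIntegral_rieszKernel_shell μ hε.1 hε.2
  exact hδ.not_ge (ge_of_tendsto h_diff h_shell)

end Degenerate

theorem stmt_1 (n : ℕ) (hn : 0 < n) :
    ∃ C : ℝ, 0 < C ∧ ∀ (x : EuclideanSpace ℝ (Fin n)) (t : ℝ), 0 < t →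
      ∀ L : EuclideanSpace ℝ (Fin n),
        Filter.Tendsto
          (fun ε : ℝ => ∫ y in Metric.ball x t \ Metric.ball 0 ε,
            (‖y‖ ^ (-((n : ℝ) + 1))) • y)
          (𝓝[>] 0) (𝓝 L) →
        ‖L‖ ≤ C * Real.log ((‖x‖ + t) / |‖x‖ - t|) := by
  have : Nontrivial (EuclideanSpace ℝ (Fin n)) :=
    have : Nonempty (Fin n) := ⟨⟨0, hn⟩⟩
    inferInstance
  have h_kernel :
      (fun y : EuclideanSpace ℝ (Fin n) ↦ ‖y‖ ^ (-((n : ℝ) + 1)) • y) = rieszKernel := by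
    ext1 y
    simp [rieszKernel]
  refine ⟨n * volume.real (ball (0 : EuclideanSpace ℝ (Fin n)) 1),
    mul_pos (Nat.cast_pos.2 hn)
      (ENNReal.toReal_pos (measure_ball_pos _ _ one_pos).ne' measure_ball_lt_top.ne),
    fun x t ht L hL ↦ ?_⟩
  rw [h_kernel] at hL
  rcases eq_or_ne ‖x‖ t with rfl | hxt
  · exact absurd hL (not_tendsto_pv_of_norm_eq volume (norm_pos_iff.1 ht) L)
  · simpa [finrank_euclideanSpace_fin] using norm_le_of_tendsto_pv volume ht.le hxt hL
end

section
/- Let n ≥ 3 and I(x) = |x|^{1−n} on ℝⁿ. Define K_t(x) = (1/|B(x,t)|)∫_{B(x,t)} I(y) dy − I(x). If x, y ∈ ℝⁿ satisfy |x| ≥ 2|y| and 0 < t < |x|/3, then |K_t(x−y) − K_t(x)| ≤ C·|y|·t²·|x|^{−n−2}, with C depending only on n. -/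
open MeasureTheory

/-- `K_t(x) = ⨍_{B(x,t)} |y|^{1-n} dy - |x|^{1-n}`. -/
noncomputable def rieszK (n : ℕ) (t : ℝ) (x : EuclideanSpace ℝ (Fin n)) : ℝ :=
  (⨍ y in Metric.ball x t, ‖y‖ ^ ((1 : ℝ) - n)) - ‖x‖ ^ ((1 : ℝ) - n)

/-!
Write `I w = ‖w‖ ^ (1 - n)` and `G z = I (z - y) - I z`, so that
`K_t(x - y) - K_t(x) = ⨍_{B(x,t)} G - G x`. Averaging over a ball centred at `x` kills the
linear term of the Taylor expansion of `G` at `x` by symmetry, so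
`|⨍ G - G x| ≤ t · sup_{B(x,t)} ‖DG z - DG x‖`. Here `DG z - DG x` is a second difference of
`DI`, of norm at most `‖y‖ t sup ‖D³I‖`. As `I` is homogeneous of degree `1 - n`, `D³I` is
homogeneous of degree `-n - 2`, so compactness of the unit sphere gives
`‖D³I ζ‖ ≤ M ‖ζ‖ ^ (-n - 2)`, and every point `ζ` involved has `‖ζ‖ ≥ ‖x‖ / 6`.
-/

open Metric Set

section Homogeneous

variable {E F : Type*} [NormedAddCommGroup E] [NormedSpace ℝ E]
  [NormedAddCommGroup F] [NormedSpace ℝ F]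

lemma norm_iteratedFDeriv_smul_of_homogeneous {f : E → F} {p : ℝ}
    (hf : ∀ c : ℝ, 0 < c → ∀ v, f (c • v) = c ^ p • f v) (i : ℕ) {c : ℝ} (hc : 0 < c)
    (u : E) :
    c ^ i * ‖iteratedFDeriv ℝ i f (c • u)‖ = c ^ p * ‖iteratedFDeriv ℝ i f u‖ := by
  let g : E ≃L[ℝ] E := ContinuousLinearEquiv.smulLeft (Units.mk0 c hc.ne')
  let h : F ≃L[ℝ] F := ContinuousLinearEquiv.smulLeft (Units.mk0 (c ^ p) (by positivity))
  have hfg : f ∘ g = h ∘ f := funext (hf c hc)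
  have right : iteratedFDeriv ℝ i (f ∘ g) u =
      (iteratedFDeriv ℝ i f (c • u)).compContinuousLinearMap fun _ => (g : E →L[ℝ] E) := by
    rw [← iteratedFDerivWithin_univ, ← iteratedFDerivWithin_univ, ← preimage_univ (f := g)]
    exact g.iteratedFDerivWithin_comp_right f uniqueDiffOn_univ (mem_univ _) i
  have left : iteratedFDeriv ℝ i (h ∘ f) u = c ^ p • iteratedFDeriv ℝ i f u := by
    rw [h.iteratedFDeriv_comp_left]; rfl
  have scale :
      (iteratedFDeriv ℝ i f (c • u)).compContinuousLinearMap (fun _ => (g : E →L[ℝ] E)) =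
        c ^ i • iteratedFDeriv ℝ i f (c • u) := by
    ext m
    have := (iteratedFDeriv ℝ i f (c • u)).map_smul_univ (fun _ => c) m
    rwa [Finset.prod_const, Finset.card_univ, Fintype.card_fin] at this
  have := congrArg norm ((scale.symm.trans right.symm).trans (hfg ▸ left))
  rwa [norm_smul, norm_smul, Real.norm_of_nonneg (by positivity),
    Real.norm_of_nonneg (by positivity)] at this

lemma norm_iteratedFDeriv_le_of_homogeneous {f : E → F} {p : ℝ}
    (hf : ∀ c : ℝ, 0 < c → ∀ v, f (c • v) = c ^ p • f v) {i : ℕ} {M : ℝ}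
    (hM : ∀ u : E, ‖u‖ = 1 → ‖iteratedFDeriv ℝ i f u‖ ≤ M) {w : E} (hw : w ≠ 0) :
    ‖iteratedFDeriv ℝ i f w‖ ≤ M * ‖w‖ ^ (p - i) := by
  have hc : 0 < ‖w‖ := norm_pos_iff.2 hw
  have hu : ‖‖w‖⁻¹ • w‖ = 1 := by rw [norm_smul, norm_inv, norm_norm, inv_mul_cancel₀ hc.ne']
  have key := norm_iteratedFDeriv_smul_of_homogeneous hf i hc (‖w‖⁻¹ • w)
  rw [smul_inv_smul₀ hc.ne'] at key
  rw [Real.rpow_sub hc, Real.rpow_natCast, mul_div_assoc', le_div_iff₀ (by positivity),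
    mul_comm, key, mul_comm M]
  exact mul_le_mul_of_nonneg_left (hM _ hu) (by positivity)

end Homogeneous

section NormRpow

variable {E : Type*} [NormedAddCommGroup E] [InnerProductSpace ℝ E]

lemma contDiffAt_norm_rpow (p : ℝ) {w : E} (hw : w ≠ 0) {m : ℕ∞} :
    ContDiffAt ℝ m (fun v : E => ‖v‖ ^ p) w :=
  (Real.contDiffAt_rpow_const_of_ne (norm_ne_zero_iff.2 hw)).comp w (contDiffAt_norm ℝ hw)

lemma exists_norm_iteratedFDeriv_norm_rpow_le [FiniteDimensional ℝ E] (p : ℝ) (i : ℕ) :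
    ∃ M > 0, ∀ w : E, w ≠ 0 →
      ‖iteratedFDeriv ℝ i (fun v : E => ‖v‖ ^ p) w‖ ≤ M * ‖w‖ ^ (p - i) := by
  have hcont : ContinuousOn (iteratedFDeriv ℝ i (fun v : E => ‖v‖ ^ p)) (sphere 0 1) :=
    fun u hu => ((contDiffAt_norm_rpow p (ne_zero_of_mem_unit_sphere ⟨u, hu⟩) (m := i))
      |>.continuousAt_iteratedFDeriv le_rfl).continuousWithinAt
  obtain ⟨M, hM⟩ := (isCompact_sphere (0 : E) 1).exists_bound_of_continuousOn hcont
  refine ⟨max M 1, by positivity, fun w hw => norm_iteratedFDeriv_le_of_homogeneous ?_ ?_ hw⟩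
  · intro c hc v
    rw [norm_smul, Real.norm_of_nonneg hc.le, Real.mul_rpow hc.le (norm_nonneg v), smul_eq_mul]
  · exact fun u hu => (hM u (mem_sphere_zero_iff_norm.2 hu)).trans (le_max_left _ _)

end NormRpow

section MeanValue

variable {E F : Type*} [NormedAddCommGroup E] [NormedSpace ℝ E]
  [NormedAddCommGroup F] [NormedSpace ℝ F]

lemma fderiv_fderiv_eq_comp_iteratedFDeriv_one (f : E → F) :
    fderiv ℝ (fderiv ℝ f) =
      continuousMultilinearCurryFin1 ℝ E (E →L[ℝ] F) ∘ iteratedFDeriv ℝ 1 (fderiv ℝ f) := by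
  ext w v
  simp

lemma norm_fderiv_shift_sub_fderiv_shift_le {f : E → F} {s K : Set E} {A : ℝ} {x y z : E}
    (hs : Convex ℝ s) (hf : ∀ w ∈ s, ContDiffAt ℝ 3 f w)
    (hA : ∀ w ∈ s, ‖iteratedFDeriv ℝ 3 f w‖ ≤ A) (hK : Convex ℝ K) (hKs : K ⊆ s)
    (hKy : ∀ w ∈ K, w - y ∈ s) (hx : x ∈ K) (hz : z ∈ K) :
    ‖(fderiv ℝ f (z - y) - fderiv ℝ f z) - (fderiv ℝ f (x - y) - fderiv ℝ f x)‖ ≤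
      A * ‖y‖ * ‖z - x‖ := by
  have hf' : ∀ w ∈ s, ContDiffAt ℝ 2 (fderiv ℝ f) w := fun w hw =>
    (hf w hw).fderiv_right (by norm_num)
  -- The mean value inequality is applied to the isometric copy `iteratedFDeriv ℝ 1 (fderiv ℝ f)`
  -- of `fderiv ℝ (fderiv ℝ f)`, whose derivative has the norm of the third derivative of `f`.
  have second :
      ∀ w ∈ K, ‖fderiv ℝ (fderiv ℝ f) (w - y) - fderiv ℝ (fderiv ℝ f) w‖ ≤ A * ‖y‖ := by
    intro w hw
    rw [fderiv_fderiv_eq_comp_iteratedFDeriv_one, Function.comp_apply, Function.comp_apply,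
      ← map_sub, LinearIsometryEquiv.norm_map]
    simpa using hs.norm_image_sub_le_of_norm_fderiv_le
      (fun v hv => (hf' v hv).differentiableAt_iteratedFDeriv (by norm_num))
      (fun v hv => by rw [norm_fderiv_iteratedFDeriv, norm_iteratedFDeriv_fderiv]; exact hA v hv)
      (hKs hw) (hKy w hw)
  have hH : ∀ w ∈ K, HasFDerivAt (fun v => fderiv ℝ f (v - y) - fderiv ℝ f v)
      (fderiv ℝ (fderiv ℝ f) (w - y) - fderiv ℝ (fderiv ℝ f) w) w := fun w hw =>
    ((hasFDerivAt_comp_sub y).2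
      ((hf' _ (hKy w hw)).differentiableAt (by norm_num)).hasFDerivAt).sub
        ((hf' w (hKs hw)).differentiableAt (by norm_num)).hasFDerivAt
  exact hK.norm_image_sub_le_of_norm_hasFDerivWithin_le
    (fun w hw => (hH w hw).hasFDerivWithinAt) second hx hz

end MeanValue

lemma sub_mem_closedBall_add_norm {E : Type*} [SeminormedAddCommGroup E] {x y z : E} {t : ℝ}
    (hz : z ∈ closedBall x t) : z - y ∈ closedBall x (t + ‖y‖) := by
  rw [mem_closedBall_iff_norm, sub_right_comm]
  exact (norm_sub_le _ _).trans (by linarith [mem_closedBall_iff_norm.1 hz])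

section Translation

variable {E F : Type*} [NormedAddCommGroup E] [MeasurableSpace E] [BorelSpace E]
  [NormedAddCommGroup F] [NormedSpace ℝ F] (μ : Measure E) [μ.IsAddRightInvariant]

lemma setAverage_ball_comp_sub (f : E → F) (x y : E) (t : ℝ) :
    ⨍ z in ball x t, f (z - y) ∂μ = ⨍ z in ball (x - y) t, f z ∂μ := by
  have hpre : (fun z => z - y) ⁻¹' ball (x - y) t = ball x t := by
    ext z
    simp [dist_eq_norm]
  have hmp := measurePreserving_sub_right μ y
  rw [setAverage_eq, setAverage_eq, ← hpre, measureReal_def, measureReal_def,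
    hmp.measure_preimage measurableSet_ball.nullMeasurableSet,
    hmp.setIntegral_preimage_emb (measurableEmbedding_subRight y)]

end Translation

section BallAverage

variable {E F : Type*} [NormedAddCommGroup E] [NormedSpace ℝ E] [FiniteDimensional ℝ E]
  [MeasurableSpace E] [BorelSpace E] [NormedAddCommGroup F] [NormedSpace ℝ F]
  (μ : Measure E) [μ.IsAddHaarMeasure]

lemma setIntegral_ball_clm_sub_center (φ : E →L[ℝ] F) (x : E) (t : ℝ) :
    ∫ z in ball x t, φ (z - x) ∂μ = 0 := by
  have hpre : (fun z => (x + x) - z) ⁻¹' ball x t = ball x t := by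
    ext z
    simp only [mem_preimage, mem_ball, dist_eq_norm]
    rw [← norm_neg]
    congr! 2
    abel
  have := (Measure.measurePreserving_sub_left μ (x + x)).setIntegral_preimage_emb
    (measurableEmbedding_subLeft _) (fun z => φ (z - x)) (ball x t)
  simp only [hpre, show ∀ z, x + x - z - x = -(z - x) from fun z => by abel, map_neg,
    integral_neg] at this
  have htwice : (2 : ℝ) • ∫ z in ball x t, φ (z - x) ∂μ = 0 := by
    rw [two_smul]
    nth_rewrite 1 [← this]
    exact neg_add_cancel _
  exact (smul_eq_zero.1 htwice).resolve_left two_ne_zero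

lemma norm_setAverage_ball_sub_le [CompleteSpace F] {G : E → F} {G' : E → E →L[ℝ] F} {x : E}
    {t ε : ℝ} (ht : 0 < t) (hG : ∀ z ∈ closedBall x t, HasFDerivAt G (G' z) z)
    (hG' : ∀ z ∈ closedBall x t, ‖G' z - G' x‖ ≤ ε) :
    ‖(⨍ z in ball x t, G z ∂μ) - G x‖ ≤ ε * t := by
  have hR : ∀ z ∈ ball x t, ‖G z - G x - G' x (z - x)‖ ≤ ε * t := fun z hz => by
    refine (convex_closedBall x t).norm_image_sub_le_of_norm_hasFDerivWithin_le'
      (fun w hw => (hG w hw).hasFDerivWithinAt) hG' (mem_closedBall_self ht.le)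
      (ball_subset_closedBall hz) |>.trans ?_
    gcongr
    · exact (norm_nonneg _).trans (hG' x (mem_closedBall_self ht.le))
    · exact (mem_ball_iff_norm.1 hz).le
  have hGcont : ContinuousOn G (closedBall x t) := fun z hz =>
    (hG z hz).continuousAt.continuousWithinAt
  have hGint : IntegrableOn G (ball x t) μ :=
    (hGcont.integrableOn_compact (isCompact_closedBall x t)).mono_set ball_subset_closedBall
  have hlin : IntegrableOn (fun z => G' x (z - x)) (ball x t) μ :=
    ((by fun_prop : Continuous fun z => G' x (z - x)).continuousOn.integrableOn_compact
      (isCompact_closedBall x t)).mono_set ball_subset_closedBall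
  have hconst : IntegrableOn (fun _ => G x) (ball x t) μ :=
    integrableOn_const measure_ball_lt_top.ne
  have hV : μ.real (ball x t) ≠ 0 :=
    (ENNReal.toReal_pos (measure_ball_pos μ x ht).ne' measure_ball_lt_top.ne).ne'
  have hRint : ∫ z in ball x t, (G z - G x - G' x (z - x)) ∂μ =
      ∫ z in ball x t, G z ∂μ - μ.real (ball x t) • G x := by
    rw [integral_sub (f := fun z => G z - G x) (hGint.sub hconst) hlin,
      setIntegral_ball_clm_sub_center, sub_zero, integral_sub hGint hconst, setIntegral_const]
  have havg : (⨍ z in ball x t, G z ∂μ) - G x =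
      (μ.real (ball x t))⁻¹ • ∫ z in ball x t, (G z - G x - G' x (z - x)) ∂μ := by
    rw [setAverage_eq, hRint, smul_sub, smul_smul, inv_mul_cancel₀ hV, one_smul]
  rw [havg, norm_smul, norm_inv, Real.norm_of_nonneg measureReal_nonneg,
    inv_mul_le_iff₀ (by positivity), mul_comm]
  exact norm_setIntegral_le_of_norm_le_const measure_ball_lt_top hR

lemma norm_setAverage_ball_shift_sub_le [CompleteSpace F] {f : E → F} {s : Set E} {A t : ℝ}
    {x y : E}
    (hs : Convex ℝ s) (hf : ∀ w ∈ s, ContDiffAt ℝ 3 f w)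
    (hA : ∀ w ∈ s, ‖iteratedFDeriv ℝ 3 f w‖ ≤ A) (ht : 0 < t) (hball : closedBall x t ⊆ s)
    (hshift : ∀ z ∈ closedBall x t, z - y ∈ s) :
    ‖(⨍ z in ball x t, (f (z - y) - f z) ∂μ) - (f (x - y) - f x)‖ ≤ A * ‖y‖ * t ^ 2 := by
  have hx : x ∈ closedBall x t := mem_closedBall_self ht.le
  have hf' : ∀ w ∈ s, HasFDerivAt f (fderiv ℝ f w) w := fun w hw =>
    ((hf w hw).differentiableAt (by norm_num)).hasFDerivAt
  have hG : ∀ z ∈ closedBall x t, HasFDerivAt (fun v => f (v - y) - f v)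
      (fderiv ℝ f (z - y) - fderiv ℝ f z) z := fun z hz =>
    ((hasFDerivAt_comp_sub y).2 (hf' _ (hshift z hz))).sub (hf' z (hball hz))
  have hAy : 0 ≤ A * ‖y‖ :=
    mul_nonneg ((norm_nonneg _).trans (hA x (hball hx))) (norm_nonneg y)
  have hG' : ∀ z ∈ closedBall x t, ‖(fderiv ℝ f (z - y) - fderiv ℝ f z) -
      (fderiv ℝ f (x - y) - fderiv ℝ f x)‖ ≤ A * ‖y‖ * t := fun z hz =>
    (norm_fderiv_shift_sub_fderiv_shift_le hs hf hA (convex_closedBall x t) hball hshift hx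
      hz).trans (mul_le_mul_of_nonneg_left (mem_closedBall_iff_norm.1 hz) hAy)
  calc _ ≤ A * ‖y‖ * t * t := norm_setAverage_ball_sub_le μ ht hG hG'
    _ = A * ‖y‖ * t ^ 2 := by ring

end BallAverage

lemma rieszK_sub_rieszK_eq {n : ℕ} {t : ℝ} {x y : EuclideanSpace ℝ (Fin n)}
    (hx : ∀ z ∈ closedBall x t, z ≠ 0) (hxy : ∀ z ∈ closedBall x t, z - y ≠ 0) :
    rieszK n t (x - y) - rieszK n t x =
      (⨍ z in ball x t, (‖z - y‖ ^ ((1 : ℝ) - n) - ‖z‖ ^ ((1 : ℝ) - n))) -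
        (‖x - y‖ ^ ((1 : ℝ) - n) - ‖x‖ ^ ((1 : ℝ) - n)) := by
  have hint : ∀ c : EuclideanSpace ℝ (Fin n), (∀ z ∈ closedBall x t, z - c ≠ 0) →
      IntegrableOn (fun z => ‖z - c‖ ^ ((1 : ℝ) - n)) (ball x t) := fun c hc =>
    (ContinuousOn.integrableOn_compact (isCompact_closedBall x t) fun z hz =>
      (continuousAt_id.sub continuousAt_const).norm.rpow_const
        (Or.inl (norm_ne_zero_iff.2 (hc z hz))) |>.continuousWithinAt).mono_set
      ball_subset_closedBall
  rw [rieszK, rieszK, ← setAverage_ball_comp_sub, setAverage_eq, setAverage_eq, setAverage_eq,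
    integral_sub (hint y hxy) (by simpa using (hint 0 (by simpa using hx)).integrable), smul_sub]
  ring

theorem stmt_10_general (n : ℕ) :
    ∃ C : ℝ, 0 < C ∧ ∀ (x y : EuclideanSpace ℝ (Fin n)) (t : ℝ),
      2 * ‖y‖ ≤ ‖x‖ → 0 < t → t < ‖x‖ / 3 →
      |rieszK n t (x - y) - rieszK n t x| ≤
        C * ‖y‖ * t ^ 2 * ‖x‖ ^ (-(n : ℝ) - 2) := by
  obtain ⟨M, hM, hD3⟩ :=
    exists_norm_iteratedFDeriv_norm_rpow_le (E := EuclideanSpace ℝ (Fin n)) ((1 : ℝ) - n) 3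
  refine ⟨M * 6 ^ ((n : ℝ) + 2), by positivity, fun x y t hyx ht htx => ?_⟩
  have hfar : ∀ ζ ∈ closedBall x (t + ‖y‖), ‖x‖ / 6 ≤ ‖ζ‖ := fun ζ hζ => by
    linarith [norm_sub_norm_le x ζ, norm_sub_rev x ζ, mem_closedBall_iff_norm.1 hζ]
  have hne : ∀ ζ ∈ closedBall x (t + ‖y‖), ζ ≠ 0 := fun ζ hζ =>
    norm_pos_iff.1 (by linarith [hfar ζ hζ])
  have hball : closedBall x t ⊆ closedBall x (t + ‖y‖) :=
    closedBall_subset_closedBall (le_add_of_nonneg_right (norm_nonneg y))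
  have hshift : ∀ z ∈ closedBall x t, z - y ∈ closedBall x (t + ‖y‖) := fun z hz =>
    sub_mem_closedBall_add_norm hz
  have hA : ∀ ζ ∈ closedBall x (t + ‖y‖),
      ‖iteratedFDeriv ℝ 3 (fun v => ‖v‖ ^ ((1 : ℝ) - n)) ζ‖ ≤ M * (‖x‖ / 6) ^ (-(n : ℝ) - 2) :=
    fun ζ hζ => by
      refine (hD3 ζ (hne ζ hζ)).trans ?_
      rw [show (1 : ℝ) - n - (3 : ℕ) = -(n : ℝ) - 2 by push_cast; ring]
      gcongr ?_ * ?_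
      exact Real.rpow_le_rpow_of_nonpos (by linarith) (hfar ζ hζ)
        (by linarith [n.cast_nonneg (α := ℝ)])
  rw [rieszK_sub_rieszK_eq (fun z hz => hne z (hball hz)) (fun z hz => hne _ (hshift z hz)),
    ← Real.norm_eq_abs]
  refine (norm_setAverage_ball_shift_sub_le volume (convex_closedBall _ _)
    (fun w hw => contDiffAt_norm_rpow _ (hne w hw)) hA ht hball hshift).trans_eq ?_
  rw [Real.div_rpow (norm_nonneg x) (by norm_num), show -(n : ℝ) - 2 = -((n : ℝ) + 2) by ring,
    Real.rpow_neg (by norm_num : (0 : ℝ) ≤ 6)]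
  field_simp

theorem stmt_10 (n : ℕ) (hn : 3 ≤ n) :
    ∃ C : ℝ, 0 < C ∧ ∀ (x y : EuclideanSpace ℝ (Fin n)) (t : ℝ),
      2 * ‖y‖ ≤ ‖x‖ → 0 < t → t < ‖x‖ / 3 →
      |rieszK n t (x - y) - rieszK n t x| ≤
        C * ‖y‖ * t ^ 2 * ‖x‖ ^ (-(n : ℝ) - 2) :=
  stmt_10_general n
end

section
/- Let n ≥ 3 and I(x) = |x|^{1−n}, K_t(x) = (1/|B(x,t)|)∫_{B(x,t)} I(y) dy − I(x). If |x| ≥ 2|y| and t ≥ 2|x|, then |K_t(x−y) − K_t(x)| ≤ C·|y|·|x|^{−n}, and consequently (∫_{2|x|}^∞ |K_t(x−y) − K_t(x)|² t^{−3} dt)^{1/2} ≤ C·|y|·|x|^{−n−1}. -/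
/-!
Shifting the centre of `B(x, t)` by `y` changes the ball only on the symmetric difference, which
lies in the annulus `t - |y| ≤ |z - x| < t + |y|`. There `|z| ≥ t - |y| - |x| ≥ t / 4`, so the
integrand is at most `(t / 4)^{1-n}`, while the annulus has volume `O(|y| t^{n-1})`; dividing by
`|B(x, t)| ≍ t^n` bounds the change of the average by `O(|y| t^{-n}) = O(|y| |x|^{-n})`. The point
term `|x - y|^{1-n} - |x|^{1-n}` is handled by the mean value theorem. The bound is uniform in
`t ≥ 2|x|`, and `(∫_{2|x|}^∞ t^{-3} dt)^{1/2} ≍ |x|^{-1}` gives the square-function estimate.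
-/

open MeasureTheory

open Metric Set Module

lemma abs_rpow_sub_rpow_le_of_nonpos {p m u v : ℝ} (hp : p ≤ 0) (hm : 0 < m) (hu : m ≤ u)
    (hv : m ≤ v) : |u ^ p - v ^ p| ≤ -p * m ^ (p - 1) * |u - v| := by
  have hderiv : ∀ z ∈ Ici m, HasDerivAt (· ^ p) (p * z ^ (p - 1)) z := fun z hz =>
    Real.hasDerivAt_rpow_const (Or.inl (hm.trans_le hz).ne')
  refine (convex_Ici m).norm_image_sub_le_of_norm_deriv_le
    (fun z hz => (hderiv z hz).differentiableAt) (fun z hmz => ?_) hv hu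
  have hz : 0 < z := hm.trans_le hmz
  rw [(hderiv z hmz).deriv, norm_mul, Real.norm_eq_abs, abs_of_nonpos hp,
    Real.norm_of_nonneg (Real.rpow_nonneg hz.le _)]
  exact mul_le_mul_of_nonneg_left (Real.rpow_le_rpow_of_nonpos hm hmz (by linarith)) (by linarith)

lemma abs_setIntegral_sub_setIntegral_le {α : Type*} [MeasurableSpace α] {μ : Measure α}
    {f : α → ℝ} {s s' A : Set α} {M : ℝ} (hs : MeasurableSet s) (hs' : MeasurableSet s')
    (hA : MeasurableSet A) (hfs : IntegrableOn f s μ) (hfs' : IntegrableOn f s' μ)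
    (hμA : μ A ≠ ⊤) (hsA : symmDiff s s' ⊆ A) (hM : ∀ z ∈ A, |f z| ≤ M) :
    |∫ z in s, f z ∂μ - ∫ z in s', f z ∂μ| ≤ M * μ.real A := by
  have hbound : ∀ z, ‖s.indicator f z - s'.indicator f z‖ ≤ A.indicator (fun _ => M) z := by
    intro z
    by_cases hzs : z ∈ s <;> by_cases hzs' : z ∈ s'
    · simpa [hzs, hzs'] using indicator_nonneg (fun z hz => (abs_nonneg _).trans (hM z hz)) z
    · have hzA : z ∈ A := hsA (Or.inl ⟨hzs, hzs'⟩)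
      simpa [hzs, hzs', hzA] using hM z hzA
    · have hzA : z ∈ A := hsA (Or.inr ⟨hzs', hzs⟩)
      simpa [hzs, hzs', hzA] using hM z hzA
    · simpa [hzs, hzs'] using indicator_nonneg (fun z hz => (abs_nonneg _).trans (hM z hz)) z
  rw [← integral_indicator hs, ← integral_indicator hs',
    ← integral_sub ((integrable_indicator_iff hs).2 hfs) ((integrable_indicator_iff hs').2 hfs'),
    ← Real.norm_eq_abs, mul_comm, ← smul_eq_mul, ← integral_indicator_const M hA]
  exact norm_integral_le_of_norm_le ((integrable_indicator_iff hA).2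
    (integrableOn_const hμA)) (Filter.Eventually.of_forall hbound)

lemma symmDiff_ball_subset_ball_sdiff_ball {X : Type*} [PseudoMetricSpace X] {x x' : X}
    {t r : ℝ} (h : dist x' x ≤ r) :
    symmDiff (ball x' t) (ball x t) ⊆ ball x (t + r) \ ball x (t - r) := by
  have hr : 0 ≤ r := dist_nonneg.trans h
  rintro z (⟨hz', hz⟩ | ⟨hz, hz'⟩) <;> simp only [mem_ball, not_lt, mem_sdiff] at *
  · constructor <;> linarith [dist_triangle z x' x]
  · constructor <;> linarith [dist_triangle z x x', dist_comm x x']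

section AddHaar

variable {E : Type*} [NormedAddCommGroup E] [NormedSpace ℝ E] [FiniteDimensional ℝ E]
  [MeasurableSpace E] [BorelSpace E] (μ : Measure E) [μ.IsAddHaarMeasure]

lemma addHaar_real_ball_of_pos (x : E) {r : ℝ} (hr : 0 < r) :
    μ.real (ball x r) = r ^ finrank ℝ E * μ.real (ball 0 1) := by
  rw [measureReal_def, Measure.addHaar_ball_of_pos μ x hr, ENNReal.toReal_mul,
    ENNReal.toReal_ofReal (by positivity), measureReal_def]

lemma addHaar_real_ball_sdiff_ball_le (x : E) {t r : ℝ} (hr : 0 ≤ r) (hrt : r < t) :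
    μ.real (ball x (t + r) \ ball x (t - r)) ≤
      2 * finrank ℝ E * r * (t + r) ^ (finrank ℝ E - 1) * μ.real (ball 0 1) := by
  rw [measureReal_sdiff (ball_subset_ball (by linarith)) measurableSet_ball
    measure_ball_lt_top.ne, addHaar_real_ball_of_pos μ x (by linarith),
    addHaar_real_ball_of_pos μ x (by linarith), ← sub_mul]
  gcongr
  calc (t + r) ^ finrank ℝ E - (t - r) ^ finrank ℝ E
      ≤ |(t + r) ^ finrank ℝ E - (t - r) ^ finrank ℝ E| := le_abs_self _
    _ ≤ |(t + r) - (t - r)| * finrank ℝ E * max |t + r| |t - r| ^ (finrank ℝ E - 1) :=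
      abs_pow_sub_pow_le ..
    _ = 2 * finrank ℝ E * r * (t + r) ^ (finrank ℝ E - 1) := by
      rw [abs_of_nonneg (by linarith), abs_of_nonneg (by linarith), abs_of_nonneg (by linarith),
        max_eq_left (by linarith)]
      ring

lemma abs_setAverage_ball_sub_setAverage_ball_le {f : E → ℝ} {x x' : E} {t r M : ℝ}
    (hx : dist x' x ≤ r) (hrt : r < t) (hfx' : IntegrableOn f (ball x' t) μ)
    (hfx : IntegrableOn f (ball x t) μ) (hM₀ : 0 ≤ M)
    (hM : ∀ z ∈ ball x (t + r) \ ball x (t - r), |f z| ≤ M) :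
    |⨍ z in ball x' t, f z ∂μ - ⨍ z in ball x t, f z ∂μ| ≤
      2 * finrank ℝ E * M * r * (t + r) ^ (finrank ℝ E - 1) / t ^ finrank ℝ E := by
  have hr : 0 ≤ r := dist_nonneg.trans hx
  have ht : 0 < t := hr.trans_lt hrt
  have hω : 0 < μ.real (ball (0 : E) 1) :=
    ENNReal.toReal_pos (measure_ball_pos μ _ one_pos).ne' measure_ball_lt_top.ne
  have hsdiff := abs_setIntegral_sub_setIntegral_le measurableSet_ball measurableSet_ball
    (measurableSet_ball.diff measurableSet_ball) hfx' hfx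
    (measure_ne_top_of_subset sdiff_subset measure_ball_lt_top.ne)
    (symmDiff_ball_subset_ball_sdiff_ball hx) hM
  rw [setAverage_eq, setAverage_eq, addHaar_real_ball_of_pos μ x ht,
    addHaar_real_ball_of_pos μ x' ht, smul_eq_mul, smul_eq_mul, ← mul_sub, abs_mul,
    abs_of_pos (by positivity), inv_mul_le_iff₀ (by positivity)]
  calc _ ≤ M * μ.real (ball x (t + r) \ ball x (t - r)) := hsdiff
    _ ≤ M * (2 * finrank ℝ E * r * (t + r) ^ (finrank ℝ E - 1) * μ.real (ball 0 1)) := by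
      gcongr
      exact addHaar_real_ball_sdiff_ball_le μ x hr hrt
    _ = _ := by field_simp

lemma integrableOn_ball_rpow_norm_one_sub_finrank [Nontrivial E] (x : E) (t : ℝ) :
    IntegrableOn (fun z => ‖z‖ ^ ((1 : ℝ) - finrank ℝ E)) (ball x t) μ := by
  have hloc : LocallyIntegrable (fun z : E => ‖z‖ ^ ((1 : ℝ) - finrank ℝ E)) μ :=
    locallyIntegrable_of_norm_le_rpow (C := 1) (α := finrank ℝ E - 1) Module.finrank_pos
      (by linarith)
      (Filter.Eventually.of_forall fun z => by
        rw [one_mul, neg_sub, Real.norm_of_nonneg (Real.rpow_nonneg (norm_nonneg z) _)])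
      (continuous_norm.measurable.pow_const _).aestronglyMeasurable
  exact (hloc.integrableOn_isCompact (isCompact_closedBall x t)).mono_set ball_subset_closedBall

lemma abs_setAverage_ball_rpow_norm_sub_le {x y : E} {t : ℝ} (hx : x ≠ 0)
    (hxy : 2 * ‖y‖ ≤ ‖x‖) (ht : 2 * ‖x‖ ≤ t) :
    |⨍ z in ball (x - y) t, ‖z‖ ^ ((1 : ℝ) - finrank ℝ E) ∂μ -
        ⨍ z in ball x t, ‖z‖ ^ ((1 : ℝ) - finrank ℝ E) ∂μ| ≤
      finrank ℝ E * 4 ^ (finrank ℝ E - 1) * ‖y‖ * ‖x‖ ^ (-(finrank ℝ E : ℝ)) := by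
  have : Nontrivial E := nontrivial_of_ne x 0 hx
  obtain ⟨m, hm⟩ : ∃ m, finrank ℝ E = m + 1 := Nat.exists_eq_add_of_le' Module.finrank_pos
  have hx₀ : 0 < ‖x‖ := norm_pos_iff.2 hx
  have ht₀ : 0 < t := by linarith
  have hexp : (1 : ℝ) - finrank ℝ E = -(m : ℝ) := by rw [hm]; push_cast; ring
  have hannulus : ∀ z ∈ ball x (t + ‖y‖) \ ball x (t - ‖y‖),
      |‖z‖ ^ ((1 : ℝ) - finrank ℝ E)| ≤ (t / 4) ^ ((1 : ℝ) - finrank ℝ E) := by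
    rintro z ⟨-, hz⟩
    rw [mem_ball, not_lt, dist_eq_norm] at hz
    rw [abs_of_nonneg (by positivity)]
    exact Real.rpow_le_rpow_of_nonpos (by positivity)
      (by linarith [norm_sub_le z x]) (by rw [hexp]; simp)
  refine (abs_setAverage_ball_sub_setAverage_ball_le μ (by simp)
    (by linarith) (integrableOn_ball_rpow_norm_one_sub_finrank μ _ _)
    (integrableOn_ball_rpow_norm_one_sub_finrank μ _ _) (by positivity) hannulus).trans ?_
  rw [hexp, hm, Real.rpow_neg (by positivity), Real.rpow_neg (by positivity), Real.rpow_natCast,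
    Real.rpow_natCast, Nat.add_sub_cancel]
  have hty : t + ‖y‖ ≤ 2 * t := by linarith
  have htx : 2 ^ (m + 1) * ‖x‖ ^ (m + 1) ≤ t ^ (m + 1) := by
    rw [← mul_pow]; gcongr
  calc _ ≤ 2 * ↑(m + 1) * ((t / 4) ^ m)⁻¹ * ‖y‖ * (2 * t) ^ m / t ^ (m + 1) := by gcongr
    _ = (m + 1) * 4 ^ m * ‖y‖ * 2 ^ (m + 1) / t ^ (m + 1) := by
      rw [div_pow, mul_pow]
      push_cast
      field_simp
      ring
    _ ≤ (m + 1) * 4 ^ m * ‖y‖ * 2 ^ (m + 1) / (2 ^ (m + 1) * ‖x‖ ^ (m + 1)) := by gcongr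
    _ = _ := by
      push_cast
      field_simp

end AddHaar

lemma abs_rpow_norm_sub_sub_rpow_norm_le {F : Type*} [NormedAddCommGroup F] {x y : F} {s : ℝ}
    (hs : 0 ≤ s) (hx : x ≠ 0) (hxy : 2 * ‖y‖ ≤ ‖x‖) :
    |‖x - y‖ ^ (-s) - ‖x‖ ^ (-s)| ≤ s * 2 ^ (s + 1) * ‖y‖ * ‖x‖ ^ (-s - 1) := by
  have hx₀ : 0 < ‖x‖ := norm_pos_iff.2 hx
  have hxy' : ‖x‖ / 2 ≤ ‖x - y‖ := by linarith [norm_sub_norm_le x y]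
  have hmvt := abs_rpow_sub_rpow_le_of_nonpos (p := -s) (v := ‖x‖) (by linarith) (by positivity)
    hxy' (by linarith)
  rw [neg_neg] at hmvt
  calc _ ≤ s * (‖x‖ / 2) ^ (-s - 1) * |‖x - y‖ - ‖x‖| := hmvt
    _ ≤ s * (‖x‖ / 2) ^ (-s - 1) * ‖y‖ := by
        refine mul_le_mul_of_nonneg_left ?_ (by positivity)
        simpa using abs_norm_sub_norm_le (x - y) x
    _ = _ := by
        rw [Real.div_rpow hx₀.le zero_le_two, show -s - 1 = -(s + 1) by ring,
          Real.rpow_neg zero_le_two]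
        field_simp

theorem abs_rieszK_sub_rieszK_le {n : ℕ} {x y : EuclideanSpace ℝ (Fin n)} {t : ℝ} (hx : x ≠ 0)
    (hxy : 2 * ‖y‖ ≤ ‖x‖) (ht : 2 * ‖x‖ ≤ t) :
    |rieszK n t (x - y) - rieszK n t x| ≤ 2 * n * 4 ^ n * ‖y‖ * ‖x‖ ^ (-(n : ℝ)) := by
  have : Nontrivial (EuclideanSpace ℝ (Fin n)) := nontrivial_of_ne x 0 hx
  have hn : 0 < n := by simpa using Module.finrank_pos (R := ℝ) (M := EuclideanSpace ℝ (Fin n))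
  have haverage := abs_setAverage_ball_rpow_norm_sub_le volume hx hxy ht
  have hpointwise := abs_rpow_norm_sub_sub_rpow_norm_le (s := n - 1)
    (sub_nonneg.2 (Nat.one_le_cast.2 hn)) hx hxy
  simp only [finrank_euclideanSpace_fin] at haverage
  rw [neg_sub, sub_add_cancel, show (1 : ℝ) - n - 1 = -n by ring] at hpointwise
  have h4 : (4 : ℝ) ^ (n - 1) ≤ 4 ^ n := pow_le_pow_right₀ (by norm_num) (Nat.sub_le n 1)
  have h2 : (2 : ℝ) ^ (n : ℝ) ≤ 4 ^ n := by
    rw [Real.rpow_natCast]; exact pow_le_pow_left₀ zero_le_two (by norm_num) n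
  calc |rieszK n t (x - y) - rieszK n t x|
      ≤ |(⨍ z in ball (x - y) t, ‖z‖ ^ ((1 : ℝ) - n)) - ⨍ z in ball x t, ‖z‖ ^ ((1 : ℝ) - n)| +
          |‖x - y‖ ^ ((1 : ℝ) - n) - ‖x‖ ^ ((1 : ℝ) - n)| := by
        rw [rieszK, rieszK, sub_sub_sub_comm]; exact abs_sub _ _
    _ ≤ n * 4 ^ (n - 1) * ‖y‖ * ‖x‖ ^ (-(n : ℝ)) +
          (n - 1) * 2 ^ (n : ℝ) * ‖y‖ * ‖x‖ ^ (-(n : ℝ)) :=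
        add_le_add haverage hpointwise
    _ ≤ n * 4 ^ n * ‖y‖ * ‖x‖ ^ (-(n : ℝ)) + n * 4 ^ n * ‖y‖ * ‖x‖ ^ (-(n : ℝ)) := by
        gcongr
        linarith
    _ = _ := by ring

lemma sqrt_integral_Ioi_sq_div_pow_three_le {f : ℝ → ℝ} {a M : ℝ} (ha : 0 < a)
    (hf : ∀ t, a < t → |f t| ≤ M) : √(∫ t in Ioi a, f t ^ 2 / t ^ 3) ≤ M / a := by
  have hM : 0 ≤ M := (abs_nonneg _).trans (hf (a + 1) (by linarith))
  have hrpow : ∀ t : ℝ, 0 < t → t ^ (-3 : ℝ) = (t ^ 3)⁻¹ := fun t ht => by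
    rw [show (-3 : ℝ) = -(3 : ℕ) by norm_num, Real.rpow_neg ht.le, Real.rpow_natCast]
  have hle : ∫ t in Ioi a, f t ^ 2 / t ^ 3 ≤ ∫ t in Ioi a, M ^ 2 * t ^ (-3 : ℝ) := by
    refine integral_mono_of_nonneg ?_
      ((integrableOn_Ioi_rpow_of_lt (by norm_num) ha).const_mul _) ?_ <;>
    filter_upwards [ae_restrict_mem measurableSet_Ioi] with t ht
    · have : 0 < t := ha.trans ht
      positivity
    · have : 0 < t := ha.trans ht
      rw [hrpow t this, div_eq_mul_inv, ← sq_abs]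
      gcongr
      exact hf t ht
  have hbound : ∫ t in Ioi a, M ^ 2 * t ^ (-3 : ℝ) = (M / a) ^ 2 / 2 := by
    rw [integral_const_mul, integral_Ioi_rpow_of_lt (by norm_num) ha,
      show (-3 : ℝ) + 1 = -(2 : ℕ) by norm_num, Real.rpow_neg ha.le, Real.rpow_natCast]
    field_simp
    ring
  rw [Real.sqrt_le_iff]
  refine ⟨by positivity, hle.trans ?_⟩
  rw [hbound]
  linarith [sq_nonneg (M / a)]

theorem stmt_11_general (n : ℕ) :
    ∃ C : ℝ, 0 < C ∧ ∀ (x y : EuclideanSpace ℝ (Fin n)),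
      2 * ‖y‖ ≤ ‖x‖ →
      (∀ t : ℝ, 0 < t → 2 * ‖x‖ ≤ t →
        |rieszK n t (x - y) - rieszK n t x| ≤ C * ‖y‖ * ‖x‖ ^ (-(n : ℝ))) ∧
      Real.sqrt (∫ t in Set.Ioi (2 * ‖x‖),
          (rieszK n t (x - y) - rieszK n t x) ^ 2 / t ^ 3) ≤
        C * ‖y‖ * ‖x‖ ^ (-(n : ℝ) - 1) := by
  set C : ℝ := 2 * n * 4 ^ n + 1
  refine ⟨C, by positivity, fun x y hxy => ?_⟩
  obtain rfl | hx := eq_or_ne x 0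
  · obtain rfl : y = 0 := norm_le_zero_iff.1 (by rw [norm_zero] at hxy; linarith)
    simp
  have hx₀ : 0 < ‖x‖ := norm_pos_iff.2 hx
  have hK : ∀ t, 2 * ‖x‖ ≤ t →
      |rieszK n t (x - y) - rieszK n t x| ≤ C * ‖y‖ * ‖x‖ ^ (-(n : ℝ)) := fun t ht =>
    (abs_rieszK_sub_rieszK_le hx hxy ht).trans (by gcongr; linarith)
  refine ⟨fun t _ ht => hK t ht, ?_⟩
  calc _ ≤ C * ‖y‖ * ‖x‖ ^ (-(n : ℝ)) / (2 * ‖x‖) :=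
        sqrt_integral_Ioi_sq_div_pow_three_le (by positivity) fun t ht => hK t ht.le
    _ ≤ C * ‖y‖ * ‖x‖ ^ (-(n : ℝ)) / ‖x‖ := by gcongr; linarith
    _ = _ := by rw [Real.rpow_sub_one hx₀.ne', mul_div_assoc]

theorem stmt_11 (n : ℕ) (hn : 3 ≤ n) :
    ∃ C : ℝ, 0 < C ∧ ∀ (x y : EuclideanSpace ℝ (Fin n)),
      2 * ‖y‖ ≤ ‖x‖ →
      (∀ t : ℝ, 0 < t → 2 * ‖x‖ ≤ t →
        |rieszK n t (x - y) - rieszK n t x| ≤ C * ‖y‖ * ‖x‖ ^ (-(n : ℝ))) ∧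
      Real.sqrt (∫ t in Set.Ioi (2 * ‖x‖),
          (rieszK n t (x - y) - rieszK n t x) ^ 2 / t ^ 3) ≤
        C * ‖y‖ * ‖x‖ ^ (-(n : ℝ) - 1) :=
  stmt_11_general n
end

section
/- Let 0 < α < 1 and let I_α(x) = c|x|^{α−n} on ℝⁿ. For |x| ≥ 2|y| and t ≥ |x|/3, the difference of ball averages satisfies |(1/|B(x−y,t)|)∫_{B(x−y,t)} I_α − (1/|B(x,t)|)∫_{B(x,t)} I_α| ≤ C·t^{α−n−α/n}·|y|^{α/n}. -/
/-!
Both balls have volume `t^n |B₁|`, so the difference of the averages is at most `t^{-n}` times the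
integral of `|z|^{α-n}` over their symmetric difference `D`. For `|y| < t`, `D` lies in the annulus
`t - |y| ≤ |z - x| < t + |y|`, and otherwise in the union of the balls; either way
`|D| ≤ C |y| t^{n-1}`. Finally, comparing a set `S` with the centred ball of the same volume
(the bathtub principle for the radially decreasing kernel) gives `∫_S |z|^{α-n} ≤ C |S|^{α/n}`.
-/

open MeasureTheory Metric Set Module
open scoped symmDiff ENNReal

namespace RieszPotential

lemma ball_symmDiff_ball_subset {α : Type*} [PseudoMetricSpace α] (a b : α) (t : ℝ) :
    ball a t ∆ ball b t ⊆ ball b (t + dist a b) \ ball b (t - dist a b) := by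
  rintro z (⟨hza, hzb⟩ | ⟨hzb, hza⟩) <;>
    simp only [mem_ball, mem_sdiff, not_lt] at * <;>
    constructor <;> linarith [dist_triangle z a b, dist_triangle z b a, dist_comm a b]

lemma norm_setAverage_sub_setAverage_le {α F : Type*} [MeasurableSpace α] {μ : Measure α}
    [NormedAddCommGroup F] [NormedSpace ℝ F] {f : α → F} {s t : Set α}
    (hs : MeasurableSet s) (ht : MeasurableSet t) (hst : μ s = μ t)
    (hfs : IntegrableOn f s μ) (hft : IntegrableOn f t μ) :
    ‖⨍ x in s, f x ∂μ - ⨍ x in t, f x ∂μ‖ ≤ (μ.real s)⁻¹ * ∫ x in s ∆ t, ‖f x‖ ∂μ := by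
  have hreal : μ.real t = μ.real s := by simp only [measureReal_def, hst]
  have hsplit : ∫ x in s, f x ∂μ - ∫ x in t, f x ∂μ
      = ∫ x in s \ t, f x ∂μ - ∫ x in t \ s, f x ∂μ := by
    rw [← integral_inter_add_sdiff ht hfs, ← integral_inter_add_sdiff hs hft, inter_comm]
    abel
  rw [setAverage_eq, setAverage_eq, hreal, ← smul_sub, norm_smul, norm_inv, Real.norm_eq_abs,
    abs_of_nonneg measureReal_nonneg, hsplit, Set.symmDiff_def,
    setIntegral_union disjoint_sdiff_sdiff (ht.diff hs) (hfs.mono_set sdiff_subset).norm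
      (hft.mono_set sdiff_subset).norm]
  gcongr
  exact (norm_sub_le _ _).trans (add_le_add (norm_integral_le_integral_norm _)
    (norm_integral_le_integral_norm _))

variable {E : Type*} [NormedAddCommGroup E] [NormedSpace ℝ E] [FiniteDimensional ℝ E]
  [MeasurableSpace E] [BorelSpace E] (μ : Measure E) [μ.IsAddHaarMeasure]

lemma measureReal_ball [Nontrivial E] (x : E) {r : ℝ} (hr : 0 ≤ r) :
    μ.real (ball x r) = r ^ finrank ℝ E * μ.real (ball 0 1) := by
  rw [← Measure.addHaar_real_closedBall_eq_addHaar_real_ball,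
    Measure.addHaar_real_closedBall μ x hr]

lemma measureReal_ball_sdiff_ball [Nontrivial E] (x : E) {r R : ℝ} (hr : 0 ≤ r) (hrR : r ≤ R) :
    μ.real (ball x R \ ball x r) = (R ^ finrank ℝ E - r ^ finrank ℝ E) * μ.real (ball 0 1) := by
  rw [measureReal_sdiff (ball_subset_ball hrR) measurableSet_ball, measureReal_ball μ x hr,
    measureReal_ball μ x (hr.trans hrR)]
  ring

lemma measureReal_ball_symmDiff_ball_le [Nontrivial E] (a b : E) {t : ℝ} (ht : 0 ≤ t) :
    μ.real (ball a t ∆ ball b t) ≤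
      2 ^ finrank ℝ E * finrank ℝ E * μ.real (ball 0 1) * t ^ (finrank ℝ E - 1) * dist a b := by
  set d := finrank ℝ E
  have hd : d ≠ 0 := finrank_pos.ne'
  have hab := dist_nonneg (x := a) (y := b)
  rcases le_or_gt t (dist a b) with hts | hst
  · calc μ.real (ball a t ∆ ball b t) ≤ μ.real (ball a t) + μ.real (ball b t) :=
          (measureReal_mono symmDiff_subset_union).trans (measureReal_union_le _ _)
      _ = 2 * μ.real (ball 0 1) * (t ^ (d - 1) * t) := by
          rw [measureReal_ball μ a ht, measureReal_ball μ b ht, ← pow_sub_one_mul hd]; ring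
      _ ≤ 2 ^ d * d * μ.real (ball 0 1) * (t ^ (d - 1) * dist a b) := by
          have : (2 : ℝ) ≤ 2 ^ d * d := by
            have h1 : (1 : ℝ) ≤ d := by exact_mod_cast Nat.one_le_iff_ne_zero.2 hd
            have h2 : (2 : ℝ) ≤ 2 ^ d := le_self_pow₀ one_le_two hd
            nlinarith
          gcongr
      _ = _ := by ring
  · have hpow_sub : (t + dist a b) ^ d - (t - dist a b) ^ d ≤
        2 * dist a b * d * (2 * t) ^ (d - 1) := by
      have hmax : max |t + dist a b| |t - dist a b| ≤ 2 * t :=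
        max_le (abs_le.2 ⟨by linarith, by linarith⟩) (abs_le.2 ⟨by linarith, by linarith⟩)
      refine le_of_abs_le ((abs_pow_sub_pow_le _ _ _).trans ?_)
      rw [add_sub_sub_cancel, ← two_mul, abs_of_nonneg (by positivity)]
      gcongr
    calc μ.real (ball a t ∆ ball b t)
        ≤ μ.real (ball b (t + dist a b) \ ball b (t - dist a b)) :=
          measureReal_mono (ball_symmDiff_ball_subset a b t)
            ((measure_mono sdiff_subset).trans_lt measure_ball_lt_top).ne
      _ = ((t + dist a b) ^ d - (t - dist a b) ^ d) * μ.real (ball 0 1) :=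
          measureReal_ball_sdiff_ball μ b (by linarith) (by linarith)
      _ ≤ 2 * dist a b * d * (2 * t) ^ (d - 1) * μ.real (ball 0 1) := by gcongr
      _ = _ := by rw [mul_pow, ← pow_sub_one_mul hd 2]; ring

lemma integrableOn_norm_rpow_ball [Nontrivial E] {β : ℝ} (hβ : -(finrank ℝ E : ℝ) < β) (r : ℝ) :
    IntegrableOn (fun z : E => ‖z‖ ^ β) (ball 0 r) μ := by
  rcases le_or_gt r 0 with hr | hr
  · simp [ball_eq_empty.2 hr]
  rw [integrableOn_fun_norm_addHaar μ (f := fun y => y ^ β)]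
  have hexp : -1 < ((finrank ℝ E - 1 : ℕ) : ℝ) + β := by
    rw [Nat.cast_sub finrank_pos, Nat.cast_one]
    linarith
  refine ((intervalIntegral.integrableOn_Ioo_rpow_iff hr).2 hexp).congr_fun (fun y hy => ?_)
    measurableSet_Ioo
  simp only [Real.rpow_add hy.1, Real.rpow_natCast, smul_eq_mul]

lemma setIntegral_norm_rpow_ball (β : ℝ) {r : ℝ} (hr : 0 < r) :
    ∫ z in ball 0 r, ‖z‖ ^ β ∂μ = r ^ (β + finrank ℝ E) * ∫ z in ball 0 1, ‖z‖ ^ β ∂μ := by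
  have h := Measure.setIntegral_comp_smul_of_pos μ (fun z : E => ‖z‖ ^ β) (ball 0 1) hr
  rw [_root_.smul_ball hr.ne', smul_zero, Real.norm_of_nonneg hr.le, mul_one] at h
  simp_rw [norm_smul, Real.norm_of_nonneg hr.le, Real.mul_rpow hr.le (norm_nonneg _),
    integral_const_mul, smul_eq_mul] at h
  rw [(inv_mul_eq_iff_eq_mul₀ (pow_ne_zero _ hr.ne')).1 h.symm, Real.rpow_add hr,
    Real.rpow_natCast]
  ring

lemma setIntegral_norm_rpow_le_of_measureReal_le [Nontrivial E] {β : ℝ}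
    (hβ : -(finrank ℝ E : ℝ) < β) (hβ0 : β ≤ 0) {s : Set E} (hs : μ s ≠ ∞) {r : ℝ} (hr : 0 < r)
    (hsr : μ.real s ≤ μ.real (ball 0 r)) :
    ∫ z in s, ‖z‖ ^ β ∂μ ≤ ∫ z in ball 0 r, ‖z‖ ^ β ∂μ + r ^ β * μ.real (ball 0 r) := by
  have hball : 0 ≤ ∫ z in ball 0 r, ‖z‖ ^ β ∂μ := integral_nonneg fun z => by positivity
  by_cases hint : IntegrableOn (fun z => ‖z‖ ^ β) s μ
  swap
  · rw [integral_undef hint]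
    positivity
  have hout : ∫ z in s \ ball 0 r, ‖z‖ ^ β ∂μ ≤ r ^ β * μ.real s := by
    refine (le_abs_self _).trans ?_
    rw [← Real.norm_eq_abs]
    refine (norm_setIntegral_le_of_norm_le_const (C := r ^ β)
      ((measure_mono sdiff_subset).trans_lt hs.lt_top) (fun z hz => ?_)).trans ?_
    · rw [Real.norm_of_nonneg (by positivity)]
      exact Real.rpow_le_rpow_of_nonpos hr (by simpa using hz.2) hβ0
    · exact mul_le_mul_of_nonneg_left (measureReal_mono sdiff_subset hs) (by positivity)
  calc ∫ z in s, ‖z‖ ^ β ∂μ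
      = ∫ z in s ∩ ball 0 r, ‖z‖ ^ β ∂μ + ∫ z in s \ ball 0 r, ‖z‖ ^ β ∂μ :=
        (integral_inter_add_sdiff measurableSet_ball hint).symm
    _ ≤ ∫ z in ball 0 r, ‖z‖ ^ β ∂μ + r ^ β * μ.real s :=
        add_le_add (setIntegral_mono_set (integrableOn_norm_rpow_ball μ hβ r)
          (ae_of_all _ fun z => by positivity) inter_subset_right.eventuallyLE) hout
    _ ≤ _ := by gcongr

theorem exists_setIntegral_norm_rpow_le [Nontrivial E] {β : ℝ}
    (hβ : -(finrank ℝ E : ℝ) < β) (hβ0 : β ≤ 0) :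
    ∃ C > 0, ∀ s : Set E, μ s ≠ ∞ →
      ∫ z in s, ‖z‖ ^ β ∂μ ≤ C * μ.real s ^ (1 + β / finrank ℝ E) := by
  set d := finrank ℝ E
  have hd : (0 : ℝ) < d := by exact_mod_cast finrank_pos
  set V := μ.real (ball (0 : E) 1)
  have hV : 0 < V := ENNReal.toReal_pos (measure_ball_pos μ 0 one_pos).ne' measure_ball_lt_top.ne
  have hΦ : 0 ≤ ∫ z in ball (0 : E) 1, ‖z‖ ^ β ∂μ := integral_nonneg fun z => by positivity
  refine ⟨((∫ z in ball (0 : E) 1, ‖z‖ ^ β ∂μ) + V) / V ^ (1 + β / d), by positivity,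
    fun s hs => ?_⟩
  rcases measureReal_nonneg.eq_or_lt with hm | hm
  · rw [setIntegral_measure_zero _ ((measureReal_eq_zero_iff hs).1 hm.symm)]
    positivity
  set r := (μ.real s / V) ^ (d⁻¹ : ℝ)
  have hr : 0 < r := by positivity
  have hrd : r ^ d = μ.real s / V := by
    rw [← Real.rpow_natCast, ← Real.rpow_mul (by positivity), inv_mul_cancel₀ hd.ne',
      Real.rpow_one]
  have hrβd : r ^ (β + d) = μ.real s ^ (1 + β / d) / V ^ (1 + β / d) := by
    rw [← Real.rpow_mul (by positivity), ← Real.div_rpow measureReal_nonneg hV.le]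
    congr 1
    field_simp
    ring
  calc ∫ z in s, ‖z‖ ^ β ∂μ
      ≤ ∫ z in ball 0 r, ‖z‖ ^ β ∂μ + r ^ β * μ.real (ball 0 r) := by
        refine setIntegral_norm_rpow_le_of_measureReal_le μ hβ hβ0 hs hr ?_
        rw [measureReal_ball μ 0 hr.le, hrd, div_mul_cancel₀ _ hV.ne']
    _ = r ^ (β + d) * ((∫ z in ball (0 : E) 1, ‖z‖ ^ β ∂μ) + V) := by
        rw [setIntegral_norm_rpow_ball μ β hr, measureReal_ball μ 0 hr.le, Real.rpow_add hr,
          Real.rpow_natCast]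
        ring
    _ = _ := by rw [hrβd]; ring

theorem exists_abs_setAverage_norm_rpow_ball_sub_le [Nontrivial E] {β : ℝ}
    (hβ : -(finrank ℝ E : ℝ) < β) (hβ0 : β ≤ 0) :
    ∃ C > 0, ∀ (a b : E) (t : ℝ), 0 < t →
      |⨍ z in ball a t, ‖z‖ ^ β ∂μ - ⨍ z in ball b t, ‖z‖ ^ β ∂μ| ≤
        C * t ^ (β - β / finrank ℝ E - 1) * dist a b ^ (1 + β / finrank ℝ E) := by
  set d := finrank ℝ E
  have hd : (0 : ℝ) < d := by exact_mod_cast finrank_pos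
  have hγ : 0 < 1 + β / d := by
    have : -1 < β / d := by rw [lt_div_iff₀ hd]; linarith
    linarith
  obtain ⟨C, hC, hCs⟩ := exists_setIntegral_norm_rpow_le μ hβ hβ0
  set V := μ.real (ball (0 : E) 1)
  have hV : 0 < V := ENNReal.toReal_pos (measure_ball_pos μ 0 one_pos).ne' measure_ball_lt_top.ne
  refine ⟨C * (2 ^ d * d * V) ^ (1 + β / d) / V, by positivity, fun a b t ht => ?_⟩
  have hint (x : E) : IntegrableOn (fun z => ‖z‖ ^ β) (ball x t) μ :=
    (integrableOn_norm_rpow_ball μ hβ (‖x‖ + t)).mono_set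
      (ball_subset_ball' (by rw [dist_zero_right, add_comm]))
  have hfin : μ (ball a t ∆ ball b t) ≠ ∞ :=
    ((measure_mono symmDiff_subset_union).trans_lt
      (measure_union_lt_top measure_ball_lt_top measure_ball_lt_top)).ne
  have htexp : t ^ (β - β / d - 1) = (t ^ (d - 1)) ^ (1 + β / d) / t ^ d := by
    rw [← Real.rpow_natCast, ← Real.rpow_natCast, ← Real.rpow_mul ht.le, ← Real.rpow_sub ht,
      Nat.cast_sub finrank_pos, Nat.cast_one]
    congr 1
    field_simp
    ring
  calc |⨍ z in ball a t, ‖z‖ ^ β ∂μ - ⨍ z in ball b t, ‖z‖ ^ β ∂μ|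
      ≤ (μ.real (ball a t))⁻¹ * ∫ z in ball a t ∆ ball b t, ‖‖z‖ ^ β‖ ∂μ :=
        norm_setAverage_sub_setAverage_le measurableSet_ball measurableSet_ball
          (by rw [Measure.addHaar_ball_center μ a, Measure.addHaar_ball_center μ b])
          (hint a) (hint b)
    _ = (t ^ d * V)⁻¹ * ∫ z in ball a t ∆ ball b t, ‖z‖ ^ β ∂μ := by
        simp_rw [Real.norm_of_nonneg (Real.rpow_nonneg (norm_nonneg _) _),
          measureReal_ball μ a ht.le]
        rfl
    _ ≤ (t ^ d * V)⁻¹ * (C * (2 ^ d * d * V * t ^ (d - 1) * dist a b) ^ (1 + β / d)) := by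
        gcongr
        refine (hCs _ hfin).trans ?_
        gcongr
        exact measureReal_ball_symmDiff_ball_le μ a b ht.le
    _ = _ := by
        rw [htexp, Real.mul_rpow (by positivity) (by positivity),
          Real.mul_rpow (by positivity) (by positivity)]
        field_simp

end RieszPotential

theorem stmt_15 (n : ℕ) (hn : 0 < n) (α : ℝ) (hα : 0 < α) (hα1 : α < 1) (c : ℝ) :
    ∃ C : ℝ, 0 < C ∧ ∀ (x y : EuclideanSpace ℝ (Fin n)) (t : ℝ),
      2 * ‖y‖ ≤ ‖x‖ → ‖x‖ / 3 ≤ t → 0 < t →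
      |(⨍ z in Metric.ball (x - y) t, c * ‖z‖ ^ (α - (n : ℝ))) -
          ⨍ z in Metric.ball x t, c * ‖z‖ ^ (α - (n : ℝ))| ≤
        C * t ^ (α - (n : ℝ) - α / n) * ‖y‖ ^ (α / n) := by
  have : Nonempty (Fin n) := ⟨⟨0, hn⟩⟩
  have hdim : finrank ℝ (EuclideanSpace ℝ (Fin n)) = n := finrank_euclideanSpace_fin
  have hn1 : (1 : ℝ) ≤ n := by exact_mod_cast hn
  obtain ⟨C, hC, hbound⟩ := RieszPotential.exists_abs_setAverage_norm_rpow_ball_sub_le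
    (volume : Measure (EuclideanSpace ℝ (Fin n))) (β := α - n) (by rw [hdim]; linarith)
    (by linarith)
  refine ⟨(|c| + 1) * C, by positivity, fun x y t _ _ ht => ?_⟩
  have h := hbound (x - y) x t ht
  have hexp₁ : α - n - (α - n) / n - 1 = α - n - α / n := by field_simp; ring
  have hexp₂ : 1 + (α - n) / n = α / n := by field_simp; ring
  rw [hdim, hexp₁, hexp₂, dist_eq_norm, sub_sub_cancel_left, norm_neg] at h
  have hconst (s : Set (EuclideanSpace ℝ (Fin n))) :
      ⨍ z in s, c * ‖z‖ ^ (α - (n : ℝ)) = c * ⨍ z in s, ‖z‖ ^ (α - (n : ℝ)) := by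
    simp only [setAverage_eq, integral_const_mul, smul_eq_mul]
    ring
  rw [hconst, hconst, ← mul_sub, abs_mul]
  calc |c| * |_ - _| ≤ (|c| + 1) * (C * t ^ (α - n - α / n) * ‖y‖ ^ (α / n)) := by
        gcongr; linarith
    _ = _ := by ring
end

section
/- In dimension n = 1 with α = 2N+1 (N a positive integer), the fundamental solution satisfies Δ^N I_α(x) = A' + B'·log|x| with B' ≠ 0, and for |x| ≥ 2|y| one has t^{2N}·|(Δ^N I_α)_{B(x−y,t)} − (Δ^N I_α)_{B(x,t)}| ≤ C·t^{2N−1/2}·|y|^{1/2}, where (g)_{B(x,t)} denotes the mean over the interval (x−t, x+t). -/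
/-!
Differentiating `2N` times turns `|x|^{2N} (A + B log|x|)` into `A' + (2N)! B log|x|`.
Translating one of the two balls writes the difference of means as the mean over `B(x, t)` of
`φ_y(u) = log|u - y| - log|u|`. Since `φ_y(u) = φ_1(u / y)` and `φ_1` has only logarithmic
singularities and decays like `1/u`, `φ_y` is square integrable on the whole line with
`‖φ_y‖₂² = |y| ‖φ_1‖₂²`. Jensen's inequality bounds the square of the mean of `φ_y` over `B(x, t)`
by `‖φ_y‖₂² / (2t)`, which gives the factor `(|y| / t)^{1/2}`.
-/

open MeasureTheory Set Real Metric intervalIntegral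

theorem hasDerivAt_pow_succ_mul_add_mul_log (m : ℕ) (a b : ℝ) {x : ℝ} (hx : x ≠ 0) :
    HasDerivAt (fun u => u ^ (m + 1) * (a + b * log u))
      (x ^ m * ((m + 1) * a + b + (m + 1) * b * log x)) x := by
  refine ((hasDerivAt_pow (m + 1) x).mul
    (((hasDerivAt_log hx).const_mul b).const_add a)).congr_deriv ?_
  rw [Nat.add_sub_cancel, pow_succ]
  field_simp
  push_cast
  ring

theorem iteratedDeriv_pow_mul_add_mul_log {m k : ℕ} (hk : k ≤ m) (a b : ℝ) :
    ∃ a' : ℝ, ∀ x ≠ 0, iteratedDeriv k (fun u => u ^ m * (a + b * log u)) x =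
      x ^ (m - k) * (a' + m.descFactorial k * b * log x) := by
  induction k with
  | zero => exact ⟨a, fun x _ => by simp⟩
  | succ k ih =>
    obtain ⟨a', ha'⟩ := ih (by omega)
    obtain ⟨j, hj⟩ : ∃ j, m - k = j + 1 := ⟨m - k - 1, by omega⟩
    refine ⟨(m - k : ℕ) * a' + m.descFactorial k * b, fun x hx => ?_⟩
    have hloc : iteratedDeriv k (fun u => u ^ m * (a + b * log u)) =ᶠ[nhds x]
        fun u => u ^ (j + 1) * (a' + m.descFactorial k * b * log u) := by
      filter_upwards [isOpen_ne.mem_nhds hx] with u hu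
      rw [ha' u hu, hj]
    rw [iteratedDeriv_succ, hloc.deriv_eq,
      (hasDerivAt_pow_succ_mul_add_mul_log j a' _ hx).deriv, Nat.descFactorial_succ,
      show m - (k + 1) = j by omega, hj]
    push_cast
    ring

theorem log_sq_le_of_one_le {s : ℝ} (hs : 1 ≤ s) : log s ^ 2 ≤ 16 * s ^ (1 / 2 : ℝ) := by
  have h0 : 0 ≤ log s := log_nonneg hs
  have h4 : log s ≤ 4 * s ^ (1 / 4 : ℝ) := by
    have := log_le_rpow_div (by linarith : (0 : ℝ) ≤ s) (by norm_num : (0 : ℝ) < 1 / 4)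
    linarith
  have hsq : (s ^ (1 / 4 : ℝ)) ^ 2 = s ^ (1 / 2 : ℝ) := by
    rw [← rpow_natCast, ← rpow_mul (by linarith)]
    norm_num
  nlinarith

theorem log_sq_le_rpow {s : ℝ} (hs : 0 < s) :
    log s ^ 2 ≤ 16 * (s ^ (-(1 / 2) : ℝ) + s ^ (1 / 2 : ℝ)) := by
  have hneg : 0 ≤ s ^ (-(1 / 2) : ℝ) := by positivity
  have hpos : 0 ≤ s ^ (1 / 2 : ℝ) := by positivity
  rcases le_or_gt 1 s with h1 | h1
  · nlinarith [log_sq_le_of_one_le h1]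
  · have h := log_sq_le_of_one_le (one_le_inv₀ hs |>.2 h1.le)
    rw [log_inv, neg_sq, inv_rpow hs.le, ← rpow_neg hs.le] at h
    linarith

theorem intervalIntegrable_log_sq (a b : ℝ) :
    IntervalIntegrable (fun x => log x ^ 2) volume a b := by
  refine intervalIntegrable_of_even (fun x => by rw [log_neg_eq_log]) fun x hx => ?_
  refine ((intervalIntegrable_rpow' (r := -(1 / 2)) (by norm_num)).add
    (intervalIntegrable_rpow' (r := 1 / 2) (by norm_num))).const_mul 16 |>.mono_fun'
    (by fun_prop) ?_
  refine ae_restrict_of_forall_mem measurableSet_uIoc fun s hs => ?_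
  rw [uIoc_of_le hx.le] at hs
  simpa only [norm_of_nonneg (sq_nonneg _)] using log_sq_le_rpow hs.1

theorem abs_log_sub_one_sub_log_le {s : ℝ} (hs : 2 ≤ |s|) :
    |log (s - 1) - log s| ≤ 2 / |s| := by
  have hs0 : s ≠ 0 := by rintro rfl; norm_num at hs
  have hs1 : s - 1 ≠ 0 := by rintro h; rw [show s = 1 by linarith] at hs; norm_num at hs
  have hinv : |s⁻¹| ≤ 1 / 2 := by
    rw [abs_inv]; exact inv_le_of_inv_le₀ (by norm_num) (by linarith)
  have h := abs_log_sub_add_sum_range_le (hinv.trans_lt (by norm_num)) 0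
  rw [Finset.sum_range_zero, zero_add, pow_one,
    show 1 - s⁻¹ = (s - 1) / s by field_simp, log_div hs1 hs0] at h
  calc |log (s - 1) - log s| ≤ |s⁻¹| / (1 - |s⁻¹|) := h
    _ ≤ |s⁻¹| / (1 / 2) := by gcongr; linarith
    _ = 2 / |s| := by rw [abs_inv]; ring

theorem sq_log_sub_one_sub_log_le {s : ℝ} (hs : 2 ≤ |s|) :
    (log (s - 1) - log s) ^ 2 ≤ 5 * (1 + s ^ 2)⁻¹ := by
  rw [← sq_abs]
  calc |log (s - 1) - log s| ^ 2 ≤ (2 / |s|) ^ 2 := by gcongr; exact abs_log_sub_one_sub_log_le hs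
    _ = 4 / s ^ 2 := by rw [div_pow, sq_abs]; norm_num
    _ ≤ 5 * (1 + s ^ 2)⁻¹ := by
      rw [← div_eq_mul_inv, div_le_div_iff₀ (by nlinarith [sq_abs s]) (by positivity)]
      nlinarith [sq_abs s]

theorem integrable_sq_log_sub_one_sub_log :
    Integrable fun s => (log (s - 1) - log s) ^ 2 := by
  have hmeas : AEStronglyMeasurable (fun s => (log (s - 1) - log s) ^ 2) volume := by
    fun_prop
  rw [← integrableOn_univ, ← union_compl_self (Icc (-2 : ℝ) 2)]
  refine IntegrableOn.union ?_ ?_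
  · have hshift : IntervalIntegrable (fun s => log (s - 1) ^ 2) volume (-2) 2 := by
      convert (intervalIntegrable_log_sq (-3) 1).comp_sub_right 1 using 1 <;> norm_num
    have hIcc (f : ℝ → ℝ) (hf : IntervalIntegrable f volume (-2) 2) :
        IntegrableOn f (Icc (-2) 2) :=
      (intervalIntegrable_iff_integrableOn_Icc_of_le (by norm_num)).1 hf
    have hmaj := ((hIcc _ hshift).const_mul 2).add
      ((hIcc _ (intervalIntegrable_log_sq _ _)).const_mul 2)
    refine hmaj.mono' hmeas.restrict (ae_of_all _ fun s => ?_)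
    rw [norm_of_nonneg (sq_nonneg _), Pi.add_apply]
    nlinarith [sq_nonneg (log (s - 1) + log s)]
  · refine (integrable_inv_one_add_sq.const_mul 5).integrableOn.mono' hmeas.restrict
      (ae_restrict_of_forall_mem measurableSet_Icc.compl fun s hs => ?_)
    have h2 : 2 ≤ |s| := by
      rw [le_abs']
      by_contra! h
      exact hs ⟨by linarith, by linarith⟩
    rw [norm_of_nonneg (sq_nonneg _)]
    exact sq_log_sub_one_sub_log_le h2

theorem sq_log_sub_sub_log_ae_eq {y : ℝ} (hy : y ≠ 0) :
    (fun u => (log (u - y) - log u) ^ 2) =ᵐ[volume]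
      fun u => (log (u / y - 1) - log (u / y)) ^ 2 := by
  have hnull : ∀ᵐ u : ℝ, u ∉ ({0, y} : Set ℝ) :=
    measure_eq_zero_iff_ae_notMem.1 ((toFinite _).measure_zero _)
  filter_upwards [hnull] with u hu
  simp only [mem_insert_iff, mem_singleton_iff, not_or] at hu
  rw [show u / y - 1 = (u - y) / y by field_simp, log_div (sub_ne_zero.2 hu.2) hy,
    log_div hu.1 hy]
  ring

theorem integrable_sq_log_sub_sub_log (y : ℝ) :
    Integrable fun u => (log (u - y) - log u) ^ 2 := by
  rcases eq_or_ne y 0 with rfl | hy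
  · simp
  · exact ((integrable_comp_div_iff (fun s => (log (s - 1) - log s) ^ 2) hy).2
      integrable_sq_log_sub_one_sub_log).congr (sq_log_sub_sub_log_ae_eq hy).symm

theorem integral_sq_log_sub_sub_log (y : ℝ) :
    ∫ u, (log (u - y) - log u) ^ 2 = |y| * ∫ s, (log (s - 1) - log s) ^ 2 := by
  rcases eq_or_ne y 0 with rfl | hy
  · simp
  · rw [integral_congr_ae (sq_log_sub_sub_log_ae_eq hy),
      Measure.integral_comp_div (fun s => (log (s - 1) - log s) ^ 2), smul_eq_mul]

theorem integrableOn_log_sub_ball (y z t : ℝ) :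
    IntegrableOn (fun u => log (u - y)) (ball z t) := by
  have h : IntervalIntegrable (fun u => log (u - y)) volume (z - t) (z + t) := by
    convert (intervalIntegrable_log' (a := z - y - t) (b := z - y + t)).comp_sub_right y
      using 1 <;> ring
  rw [Real.ball_eq_Ioo]
  exact h.1.mono_set Ioo_subset_Ioc_self

theorem sq_setAverage_le_setAverage_sq {α : Type*} [MeasurableSpace α] {μ : Measure α}
    {s : Set α} {f : α → ℝ} (h0 : μ s ≠ 0) (hs : μ s ≠ ⊤) (hf : IntegrableOn f s μ)
    (hf2 : IntegrableOn (fun x => f x ^ 2) s μ) :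
    (⨍ x in s, f x ∂μ) ^ 2 ≤ ⨍ x in s, f x ^ 2 ∂μ :=
  (even_two.convexOn_pow (𝕜 := ℝ)).map_set_average_le (continuous_pow 2).continuousOn
    isClosed_univ h0 hs (ae_of_all _ fun _ => mem_univ _) hf hf2

theorem setAverage_ball_sub_sub_setAverage_ball {f : ℝ → ℝ} {t : ℝ}
    (hf : ∀ z, IntegrableOn f (ball z t)) (x y : ℝ) :
    (⨍ u in ball (x - y) t, f u) - ⨍ u in ball x t, f u =
      ⨍ u in ball x t, (f (u - y) - f u) := by
  have hpre : (· - y) ⁻¹' ball (x - y) t = ball x t := by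
    ext u; simp [Real.dist_eq]
  have hmp := measurePreserving_sub_right volume y
  have hemb := (MeasurableEquiv.subRight y).measurableEmbedding
  have htrans : ∫ u in ball x t, f (u - y) = ∫ u in ball (x - y) t, f u := by
    rw [← hpre]; exact hmp.setIntegral_preimage_emb hemb f _
  have hint : IntegrableOn (fun u => f (u - y)) (ball x t) := by
    rw [← hpre]; exact (hmp.integrableOn_comp_preimage hemb).2 (hf _)
  have hvol : volume.real (ball (x - y) t) = volume.real (ball x t) := by
    simp only [measureReal_def, Real.volume_ball]
  rw [setAverage_eq, setAverage_eq, setAverage_eq, integral_sub hint (hf x), htrans, hvol,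
    smul_sub]

theorem sq_setAverage_log_sub_sub_log_le (x y : ℝ) {t : ℝ} (ht : 0 < t) :
    (⨍ u in ball x t, (log (u - y) - log u)) ^ 2 ≤
      |y| / (2 * t) * ∫ s, (log (s - 1) - log s) ^ 2 := by
  have hvol : volume (ball x t) ≠ 0 := by
    rw [Real.volume_ball]; simp [ht]
  have hsq := integrable_sq_log_sub_sub_log y
  calc (⨍ u in ball x t, (log (u - y) - log u)) ^ 2
      ≤ ⨍ u in ball x t, (log (u - y) - log u) ^ 2 :=
        sq_setAverage_le_setAverage_sq hvol measure_ball_lt_top.ne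
          ((integrableOn_log_sub_ball y x t).sub (by simpa using integrableOn_log_sub_ball 0 x t))
          hsq.integrableOn
    _ = (2 * t)⁻¹ * ∫ u in ball x t, (log (u - y) - log u) ^ 2 := by
        rw [setAverage_eq, Real.volume_real_ball ht.le, smul_eq_mul]
    _ ≤ (2 * t)⁻¹ * ∫ u, (log (u - y) - log u) ^ 2 :=
        mul_le_mul_of_nonneg_left
          (setIntegral_le_integral hsq (ae_of_all _ fun _ => sq_nonneg _)) (by positivity)
    _ = |y| / (2 * t) * ∫ s, (log (s - 1) - log s) ^ 2 := by
        rw [integral_sq_log_sub_sub_log]; ring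

theorem abs_setAverage_ball_sub_sub_setAverage_ball_log_le (a b x y : ℝ) {t : ℝ} (ht : 0 < t) :
    |(⨍ u in ball (x - y) t, (a + b * log |u|)) - ⨍ u in ball x t, (a + b * log |u|)| ≤
      |b| * √(∫ s, (log (s - 1) - log s) ^ 2) * √(|y| / t) := by
  have hf : ∀ z, IntegrableOn (fun u => a + b * log |u|) (ball z t) := fun z => by
    have hlog : IntegrableOn log (ball z t) := by
      simpa only [sub_zero] using integrableOn_log_sub_ball 0 z t
    simp only [log_abs]
    exact (integrableOn_const measure_ball_lt_top.ne).add (hlog.const_mul b)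
  have hc : 0 ≤ ∫ s, (log (s - 1) - log s) ^ 2 := integral_nonneg fun _ => sq_nonneg _
  have hdiff : ⨍ u in ball x t, ((a + b * log |u - y|) - (a + b * log |u|)) =
      b * ⨍ u in ball x t, (log (u - y) - log u) := by
    simp only [log_abs, add_sub_add_left_eq_sub, ← mul_sub, setAverage_eq,
      MeasureTheory.integral_const_mul, smul_eq_mul]
    ring
  rw [setAverage_ball_sub_sub_setAverage_ball hf, hdiff, abs_mul, mul_assoc, ← sqrt_mul hc]
  gcongr
  refine abs_le_sqrt ((sq_setAverage_log_sub_sub_log_le x y ht).trans ?_)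
  rw [mul_comm]
  gcongr
  linarith

theorem stmt_19_general (N : ℕ) (A B : ℝ) (hB : B ≠ 0) :
    ∃ A' B' : ℝ, B' ≠ 0 ∧
      (∀ x : ℝ, x ≠ 0 →
        iteratedDeriv (2 * N) (fun u : ℝ => |u| ^ (2 * N) * (A + B * Real.log |u|)) x =
          A' + B' * Real.log |x|) ∧
      ∃ C : ℝ, 0 < C ∧ ∀ x y t : ℝ, 2 * |y| ≤ |x| → 0 < t →
        t ^ (2 * N) *
            |(⨍ u in Metric.ball (x - y) t, (A' + B' * Real.log |u|)) -
              ⨍ u in Metric.ball x t, (A' + B' * Real.log |u|)| ≤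
          C * t ^ ((2 * N : ℝ) - 1 / 2) * |y| ^ ((1 : ℝ) / 2) := by
  obtain ⟨A', hA'⟩ := iteratedDeriv_pow_mul_add_mul_log le_rfl A B (m := 2 * N)
  set B' : ℝ := (2 * N).factorial * B
  set K : ℝ := |B'| * √(∫ s, (log (s - 1) - log s) ^ 2)
  have hfun : (fun u : ℝ => |u| ^ (2 * N) * (A + B * log |u|)) =
      fun u => u ^ (2 * N) * (A + B * log u) := by
    funext u; rw [(even_two_mul N).pow_abs, log_abs]
  refine ⟨A', B', mul_ne_zero (by positivity) hB, fun x hx => ?_, K + 1, by positivity,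
    fun x y t _ ht => ?_⟩
  · rw [hfun, hA' x hx, Nat.sub_self, pow_zero, one_mul, Nat.descFactorial_self, log_abs]
  · have hpow :
        t ^ (2 * N) * √(|y| / t) = t ^ ((2 * N : ℝ) - 1 / 2) * |y| ^ ((1 : ℝ) / 2) := by
      rw [sqrt_div' _ ht.le, sqrt_eq_rpow, sqrt_eq_rpow, rpow_sub ht,
        show (2 * N : ℝ) = ((2 * N : ℕ) : ℝ) by push_cast; ring, rpow_natCast]
      ring
    calc t ^ (2 * N) * |(⨍ u in ball (x - y) t, (A' + B' * log |u|)) -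
            ⨍ u in ball x t, (A' + B' * log |u|)|
        ≤ t ^ (2 * N) * (K * √(|y| / t)) := by
          gcongr; exact abs_setAverage_ball_sub_sub_setAverage_ball_log_le A' B' x y ht
      _ = K * (t ^ ((2 * N : ℝ) - 1 / 2) * |y| ^ ((1 : ℝ) / 2)) := by rw [← hpow]; ring
      _ ≤ (K + 1) * (t ^ ((2 * N : ℝ) - 1 / 2) * |y| ^ ((1 : ℝ) / 2)) := by
          gcongr; linarith
      _ = (K + 1) * t ^ ((2 * N : ℝ) - 1 / 2) * |y| ^ ((1 : ℝ) / 2) := (mul_assoc _ _ _).symm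

theorem stmt_19 (N : ℕ) (hN : 0 < N) (A B : ℝ) (hB : B ≠ 0) :
    ∃ A' B' : ℝ, B' ≠ 0 ∧
      (∀ x : ℝ, x ≠ 0 →
        iteratedDeriv (2 * N) (fun u : ℝ => |u| ^ (2 * N) * (A + B * Real.log |u|)) x =
          A' + B' * Real.log |x|) ∧
      ∃ C : ℝ, 0 < C ∧ ∀ x y t : ℝ, 2 * |y| ≤ |x| → 0 < t →
        t ^ (2 * N) *
            |(⨍ u in Metric.ball (x - y) t, (A' + B' * Real.log |u|)) -
              ⨍ u in Metric.ball x t, (A' + B' * Real.log |u|)| ≤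
          C * t ^ ((2 * N : ℝ) - 1 / 2) * |y| ^ ((1 : ℝ) / 2) :=
  stmt_19_general N A B hB
end
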